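/- arXiv:1908.10724 — 6 statements merged into one kernel-verified Lean document; each statement's English description precedes it below -/
import Mathlib

section
/- For every u ∈ Conv_sc(ℝⁿ) there exists a sequence of functions u_k ∈ Conv_sc^{pa}(ℝⁿ) that epi-converges to u; here u ∈ Conv_sc^{pa}(ℝⁿ) means u ∈ Conv_sc(ℝⁿ) and there exist a polytope P, a polytopal partition {P₁,…,P_m} of P, and affine functions w₁,…,w_m : ℝⁿ → ℝ such that u = ⋀_{i=1}^m (w_i + I_{P_i}) (pointwise minimum). -/
open Filter Topology MeasureTheory

noncomputable section

/-- Euclidean space `ℝⁿ`. -/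
abbrev Vn (n : ℕ) := EuclideanSpace ℝ (Fin n)

/-- `u : ℝⁿ → ℝ ∪ {+∞}` (represented as an `EReal`-valued function that never
takes the value `⊥ = -∞`) is convex. -/
def IsConvexFn {n : ℕ} (u : Vn n → EReal) : Prop :=
  ∀ x y : Vn n, ∀ t : ℝ, 0 < t → t < 1 →
    u (t • x + (1 - t) • y) ≤ (t : EReal) * u x + ((1 - t : ℝ) : EReal) * u y

/-- `Conv(ℝⁿ)`: convex, lower semicontinuous, proper functions
`ℝⁿ → ℝ ∪ {+∞}`. -/
def ConvSet (n : ℕ) : Set (Vn n → EReal) :=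
  {u | IsConvexFn u ∧ LowerSemicontinuous u ∧ (∀ x, u x ≠ ⊥) ∧ (∃ x, u x ≠ ⊤)}

/-- `Conv_sc(ℝⁿ)`: super-coercive elements of `Conv(ℝⁿ)`, i.e.
`u(x)/|x| → +∞` as `|x| → +∞`. -/
def ConvSc (n : ℕ) : Set (Vn n → EReal) :=
  {u | u ∈ ConvSet n ∧
    ∀ M : ℝ, ∃ R : ℝ, ∀ x : Vn n, R ≤ ‖x‖ → ((M * ‖x‖ : ℝ) : EReal) ≤ u x}

/-- Epi-convergence of a sequence `uk` to `u`. -/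
def EpiConverges {n : ℕ} (uk : ℕ → Vn n → EReal) (u : Vn n → EReal) : Prop :=
  ∀ x : Vn n,
    (∀ xk : ℕ → Vn n, Tendsto xk atTop (𝓝 x) →
      u x ≤ liminf (fun k => uk k (xk k)) atTop) ∧
    (∃ xk : ℕ → Vn n, Tendsto xk atTop (𝓝 x) ∧
      Tendsto (fun k => uk k (xk k)) atTop (𝓝 (u x)))

/-- Continuity (with respect to epi-convergence) of a functional on a class `X`. -/
def ContinuousVal {n : ℕ} (X : Set (Vn n → EReal)) (Z : (Vn n → EReal) → ℝ) : Prop :=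
  ∀ (uk : ℕ → Vn n → EReal) (u : Vn n → EReal),
    (∀ k, uk k ∈ X) → u ∈ X → EpiConverges uk u →
      Tendsto (fun k => Z (uk k)) atTop (𝓝 (Z u))

/-- The valuation property on a class `X` (here `⊔`, `⊓` are the pointwise
maximum and minimum). -/
def IsValuation {n : ℕ} (X : Set (Vn n → EReal)) (Z : (Vn n → EReal) → ℝ) : Prop :=
  ∀ u v : Vn n → EReal, u ∈ X → v ∈ X → u ⊔ v ∈ X → u ⊓ v ∈ X →
    Z (u ⊔ v) + Z (u ⊓ v) = Z u + Z v

/-- Epi-translation invariance: invariance under `u ↦ u(· - x₀) + c`. -/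
def EpiTranslationInvariant {n : ℕ} (X : Set (Vn n → EReal)) (Z : (Vn n → EReal) → ℝ) : Prop :=
  ∀ u ∈ X, ∀ x₀ : Vn n, ∀ c : ℝ, Z (fun x => u (x - x₀) + (c : EReal)) = Z u

-- Epi-multiplication `λ ⊡ u`; for `λ = 0` it is the indicator of `{0}`.
open Classical in
def epiMul {n : ℕ} (l : ℝ) (u : Vn n → EReal) : Vn n → EReal :=
  if l = 0 then (fun x => if x = 0 then (0 : EReal) else ⊤)
  else fun x => (l : EReal) * u (l⁻¹ • x)

/-- `Z` is epi-homogeneous of degree `α`: `Z(λ ⊡ u) = λ^α Z(u)` for `λ > 0`. -/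
def EpiHomogeneous {n : ℕ} (X : Set (Vn n → EReal)) (Z : (Vn n → EReal) → ℝ) (α : ℝ) : Prop :=
  ∀ u ∈ X, ∀ l : ℝ, 0 < l → Z (epiMul l u) = l ^ α * Z u

/-- A polytope: the convex hull of a nonempty finite set of points. -/
def IsPolytope {n : ℕ} (P : Set (Vn n)) : Prop :=
  ∃ s : Finset (Vn n), s.Nonempty ∧ P = convexHull ℝ (s : Set (Vn n))

-- The (convex) indicator function `I_A`: `0` on `A` and `+∞` off `A`.
open Classical in
def indE {n : ℕ} (A : Set (Vn n)) : Vn n → EReal :=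
  fun x => if x ∈ A then (0 : EReal) else ⊤

/-- `Conv_sc^{pa}(ℝⁿ)`: functions `u ∈ Conv_sc(ℝⁿ)` of the form
`u = ⋀ᵢ (wᵢ + I_{Pᵢ})` with `wᵢ` affine and `{P₁,…,P_m}` a polytopal
partition of a polytope `P = ⋃ᵢ Pᵢ`. -/
def ConvScPA (n : ℕ) : Set (Vn n → EReal) :=
  {u | u ∈ ConvSc n ∧
    ∃ (m : ℕ) (P : Fin (m + 1) → Set (Vn n)) (w : Fin (m + 1) → (Vn n →ᵃ[ℝ] ℝ)),
      (∀ i, IsPolytope (P i)) ∧ IsPolytope (⋃ i, P i) ∧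
      (∀ i j, i ≠ j → interior (P i) ∩ interior (P j) = ∅) ∧
      u = fun x => ⨅ i, ((w i x : EReal) + indE (P i) x)}

/-!
Every `u ∈ Conv(ℝⁿ)` is the supremum of its affine minorants: a point strictly below the graph is
separated from the closed convex epigraph by Hahn–Banach, and a vertical separating hyperplane is
tilted using one non-vertical minorant. Since `ℝⁿ` is second countable, countably many minorants
`w₀, w₁, …` already have supremum `u`. The functions `uₖ = max_{j ≤ k} wⱼ + I_{[-k,k]ⁿ}` increase
to `u` and epi-converge to it because every `wⱼ` is continuous. Each `uₖ` is piecewise affine: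
the cube splits into the cells on which one `wⱼ` realises the maximum. A cell is a bounded
intersection of finitely many half-spaces, hence a polytope, as an extreme point is determined by
the set of constraints active at it; and two distinct affine maps cannot agree on an open set, so
distinct cells have disjoint interiors.
-/

open Set

variable {n : ℕ}

theorem exists_seq_iSup_eq {X ι : Type*} [TopologicalSpace X] [SecondCountableTopology X]
    [Nonempty ι] {f : ι → X → ℝ} (hf : ∀ i, LowerSemicontinuous (f i)) :
    ∃ e : ℕ → ι, ∀ x, ⨆ k, (f (e k) x : EReal) = ⨆ i, (f i x : EReal) := by
  have hT (q : ℚ) := TopologicalSpace.isOpen_iUnion_countable (fun i => f i ⁻¹' Ioi (q : ℝ))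
    fun i => (hf i).isOpen_preimage _
  choose T hTc hT using hT
  obtain ⟨i₀⟩ := ‹Nonempty ι›
  obtain ⟨e, he⟩ := ((countable_iUnion hTc).insert i₀).exists_eq_range (insert_nonempty _ _)
  refine ⟨e, fun x => le_antisymm (iSup_le fun k => le_iSup (fun i => (f i x : EReal)) (e k))
    (le_of_forall_lt fun r hr => ?_)⟩
  obtain ⟨q, hrq, hq⟩ := EReal.exists_rat_btwn_of_lt hr
  obtain ⟨i, hi⟩ := lt_iSup_iff.1 hq
  have hx : x ∈ ⋃ i ∈ T q, f i ⁻¹' Ioi (q : ℝ) := (hT q).symm ▸ mem_iUnion.2 ⟨i, by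
    simpa using hi⟩
  obtain ⟨j, hj, hqj⟩ := mem_iUnion₂.1 hx
  obtain ⟨k, rfl⟩ : j ∈ range e := he ▸ mem_insert_of_mem _ (mem_iUnion.2 ⟨q, hj⟩)
  exact hrq.trans ((EReal.coe_lt_coe_iff.2 hqj).trans_le
    (le_iSup (fun k => (f (e k) x : EReal)) k))

theorem EReal.coe_le_of_forall_le {a : ℝ} {b : EReal} (h : ∀ t : ℝ, b ≤ t → a ≤ t) :
    (a : EReal) ≤ b :=
  EReal.le_of_forall_lt_iff_le.1 fun t ht => EReal.coe_le_coe_iff.2 (h t ht.le)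

section minorant

variable {u : Vn n → EReal}

theorem convex_epigraph (hu : IsConvexFn u) : Convex ℝ {p : Vn n × ℝ | u p.1 ≤ p.2} := by
  refine convex_iff_forall_pos.2 fun p hp q hq a b ha hb hab => ?_
  obtain rfl : b = 1 - a := by linarith
  calc u (a • p.1 + (1 - a) • q.1) ≤ a * u p.1 + ((1 - a : ℝ) : EReal) * u q.1 :=
        hu _ _ a ha (by linarith)
    _ ≤ a * p.2 + ((1 - a : ℝ) : EReal) * q.2 :=
        add_le_add (mul_le_mul_of_nonneg_left hp (by exact_mod_cast ha.le))
          (mul_le_mul_of_nonneg_left hq (by exact_mod_cast hb.le))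
    _ = ((a * p.2 + (1 - a) * q.2 : ℝ) : EReal) := by norm_cast

theorem isClosed_epigraph (hu : LowerSemicontinuous u) :
    IsClosed {p : Vn n × ℝ | u p.1 ≤ p.2} :=
  hu.isClosed_epigraph.preimage
    (continuous_fst.prodMk (continuous_coe_real_ereal.comp continuous_snd))

theorem exists_separating_affine (hu : u ∈ ConvSet n) {x₀ : Vn n} {r : ℝ}
    (hr : (r : EReal) < u x₀) :
    ∃ (ℓ : Vn n →ᵃ[ℝ] ℝ) (c : ℝ), 0 ≤ c ∧ c * r < ℓ x₀ ∧ ∀ x (t : ℝ), u x ≤ t → ℓ x < c * t := by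
  obtain ⟨hconv, hlsc, -, x', hx'⟩ := hu
  obtain ⟨f, s, hf₀, hf⟩ := geometric_hahn_banach_point_closed (convex_epigraph hconv)
    (isClosed_epigraph hlsc) (x := (x₀, r)) (not_le.2 hr)
  let g : Vn n →L[ℝ] ℝ := f.comp (ContinuousLinearMap.inl ℝ (Vn n) ℝ)
  let c := f (0, 1)
  have hfgc : ∀ x t, f (x, t) = g x + c * t := by
    intro x t
    have : ((x, t) : Vn n × ℝ) = (x, 0) + t • ((0 : Vn n), (1 : ℝ)) := by ext <;> simp
    rw [this, map_add, map_smul, smul_eq_mul, mul_comm]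
    rfl
  let ℓ : Vn n →ᵃ[ℝ] ℝ := AffineMap.const ℝ (Vn n) s - (g : Vn n →ₗ[ℝ] ℝ).toAffineMap
  have hℓ : ∀ x, ℓ x = s - g x := fun x => rfl
  have hsep : ∀ x (t : ℝ), u x ≤ t → ℓ x < c * t := fun x t ht => by
    have := hf (x, t) ht
    rw [hfgc] at this
    rw [hℓ]
    linarith
  refine ⟨ℓ, c, ?_, by rw [hℓ]; rw [hfgc] at hf₀; linarith, hsep⟩
  -- the epigraph is unbounded above, so the separating functional cannot decrease in `t`
  by_contra! hc
  let t := max (u x').toReal ((s - g x') / c)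
  have h₁ := hsep x' t
    ((EReal.le_coe_toReal hx').trans (EReal.coe_le_coe_iff.2 (le_max_left _ _)))
  have h₂ : c * t ≤ c * ((s - g x') / c) := mul_le_mul_of_nonpos_left (le_max_right _ _) hc.le
  rw [mul_div_cancel₀ _ hc.ne, ← hℓ] at h₂
  linarith

theorem exists_affine_le (hu : u ∈ ConvSet n) :
    ∃ w : Vn n →ᵃ[ℝ] ℝ, ∀ x, (w x : EReal) ≤ u x := by
  have ⟨_, _, hbot, x', hx'⟩ := hu
  have hux' : u x' = ((u x').toReal : EReal) := (EReal.coe_toReal hx' (hbot x')).symm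
  obtain ⟨ℓ, c, -, hℓx', hℓ⟩ := exists_separating_affine hu (x₀ := x') (r := (u x').toReal - 1)
    (by rw [hux']; exact_mod_cast sub_one_lt _)
  have hc : 0 < c := by nlinarith [hℓ x' _ hux'.le]
  refine ⟨c⁻¹ • ℓ, fun x => EReal.coe_le_of_forall_le fun t ht => ?_⟩
  have := hℓ x t ht
  simp only [AffineMap.coe_smul, Pi.smul_apply, smul_eq_mul]
  rw [inv_mul_le_iff₀ hc]
  exact this.le

theorem exists_affine_le_of_lt (hu : u ∈ ConvSet n) {x₀ : Vn n} {r : ℝ}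
    (hr : (r : EReal) < u x₀) :
    ∃ w : Vn n →ᵃ[ℝ] ℝ, (∀ x, (w x : EReal) ≤ u x) ∧ r < w x₀ := by
  obtain ⟨w₀, hw₀⟩ := exists_affine_le hu
  obtain ⟨ℓ, c, hc, hℓx₀, hℓ⟩ := exists_separating_affine hu hr
  -- `(l ℓ + w₀) / (1 + l c)` is a minorant for every `l ≥ 0`, and exceeds `r` at `x₀` for large `l`
  obtain ⟨l, hl, hlr⟩ : ∃ l : ℝ, 0 ≤ l ∧ r - w₀ x₀ < l * (ℓ x₀ - c * r) := by
    obtain ⟨l, hl⟩ := exists_gt ((r - w₀ x₀) / (ℓ x₀ - c * r))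
    exact ⟨max l 0, le_max_right _ _,
      (div_lt_iff₀ (sub_pos.2 hℓx₀)).1 (hl.trans_le (le_max_left _ _))⟩
  have hpos : 0 < 1 + l * c := by positivity
  refine ⟨(1 + l * c)⁻¹ • (l • ℓ + w₀), fun x => EReal.coe_le_of_forall_le fun t ht => ?_, ?_⟩
  · have h₁ := hℓ x t ht
    have h₂ : w₀ x ≤ t := EReal.coe_le_coe_iff.1 ((hw₀ x).trans ht)
    simp only [AffineMap.coe_smul, AffineMap.coe_add, Pi.smul_apply, Pi.add_apply, smul_eq_mul]
    rw [inv_mul_le_iff₀ hpos]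
    nlinarith
  · simp only [AffineMap.coe_smul, AffineMap.coe_add, Pi.smul_apply, Pi.add_apply, smul_eq_mul]
    rw [lt_inv_mul_iff₀ hpos]
    nlinarith

theorem iSup_affine_le_eq (hu : u ∈ ConvSet n) (x : Vn n) :
    ⨆ w : {w : Vn n →ᵃ[ℝ] ℝ // ∀ x, (w x : EReal) ≤ u x}, (w.1 x : EReal) = u x := by
  refine le_antisymm (iSup_le fun w => w.2 x) (le_of_forall_lt fun r hr => ?_)
  obtain ⟨q, hrq, hq⟩ := EReal.lt_iff_exists_real_btwn.1 hr
  obtain ⟨w, hw, hqw⟩ := exists_affine_le_of_lt hu hq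
  exact hrq.trans ((EReal.coe_lt_coe_iff.2 hqw).trans_le
    (le_iSup (fun w : {w : Vn n →ᵃ[ℝ] ℝ // ∀ x, (w x : EReal) ≤ u x} => (w.1 x : EReal)) ⟨w, hw⟩))

end minorant

theorem exists_seq_affine_iSup_eq {u : Vn n → EReal} (hu : u ∈ ConvSet n) :
    ∃ w : ℕ → Vn n →ᵃ[ℝ] ℝ, (∀ j x, (w j x : EReal) ≤ u x) ∧ ∀ x, ⨆ j, (w j x : EReal) = u x := by
  have : Nonempty {w : Vn n →ᵃ[ℝ] ℝ // ∀ x, (w x : EReal) ≤ u x} :=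
    let ⟨w, hw⟩ := exists_affine_le hu; ⟨⟨w, hw⟩⟩
  obtain ⟨e, he⟩ := exists_seq_iSup_eq
    (f := fun w : {w : Vn n →ᵃ[ℝ] ℝ // ∀ x, (w x : EReal) ≤ u x} => ⇑w.1)
    fun w => w.1.continuous_of_finiteDimensional.lowerSemicontinuous
  exact ⟨fun k => (e k).1, fun k => (e k).2, fun x => (he x).trans (iSup_affine_le_eq hu x)⟩

theorem exists_finset_affine_iSup_sup'_eq {u : Vn n → EReal} (hu : u ∈ ConvSet n) :
    ∃ (W : ℕ → Finset (Vn n →ᵃ[ℝ] ℝ)) (hW : ∀ k, (W k).Nonempty), Monotone W ∧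
      ∀ x, ⨆ k, (((W k).sup' (hW k) fun v => v x : ℝ) : EReal) = u x := by
  classical
  obtain ⟨w, hwu, hw⟩ := exists_seq_affine_iSup_eq hu
  refine ⟨fun k => (Finset.range (k + 1)).image w, fun k => Finset.nonempty_range_add_one.image w,
    fun k l hkl => Finset.image_subset_image (Finset.range_subset_range.2 (by omega)),
    fun x => le_antisymm (iSup_le fun k => ?_) (hw x ▸ iSup_mono fun j => ?_)⟩
  · obtain ⟨_, hj, hwk⟩ := Finset.exists_mem_eq_sup' (Finset.nonempty_range_add_one.image w)
      fun v => v x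
    obtain ⟨j, -, rfl⟩ := Finset.mem_image.1 hj
    rw [hwk]
    exact hwu j x
  · exact EReal.coe_le_coe_iff.2 (Finset.le_sup' (fun v => v x)
      (Finset.mem_image_of_mem w (Finset.self_mem_range_succ j)))

def IsPolyhedron (K : Set (Vn n)) : Prop :=
  ∃ s : Set (Vn n →ᵃ[ℝ] ℝ), s.Finite ∧ K = {x | ∀ g ∈ s, g x ≤ 0}

namespace IsPolyhedron

variable {K L : Set (Vn n)}

theorem isClosed (hK : IsPolyhedron K) : IsClosed K := by
  obtain ⟨s, -, rfl⟩ := hK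
  simp only [ofPred_forall]
  exact isClosed_biInter fun g _ => isClosed_le g.continuous_of_finiteDimensional continuous_const

theorem convex (hK : IsPolyhedron K) : Convex ℝ K := by
  obtain ⟨s, -, rfl⟩ := hK
  simp only [ofPred_forall]
  exact convex_iInter₂ fun g _ => (convex_Iic 0).affine_preimage g

theorem inter (hK : IsPolyhedron K) (hL : IsPolyhedron L) : IsPolyhedron (K ∩ L) := by
  obtain ⟨s, hs, rfl⟩ := hK
  obtain ⟨t, ht, rfl⟩ := hL
  refine ⟨s ∪ t, hs.union ht, ?_⟩
  ext x
  simp [or_imp, forall_and]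

theorem iInter {ι : Type*} [Finite ι] {K : ι → Set (Vn n)} (hK : ∀ i, IsPolyhedron (K i)) :
    IsPolyhedron (⋂ i, K i) := by
  choose s hs hKs using hK
  refine ⟨⋃ i, s i, finite_iUnion hs, ?_⟩
  ext x
  simp only [hKs, mem_iInter, mem_ofPred_eq, mem_iUnion]
  exact ⟨fun h g ⟨i, hg⟩ => h i g hg, fun h i g hg => h g ⟨i, hg⟩⟩

theorem finite_extremePoints (hK : IsPolyhedron K) : (K.extremePoints ℝ).Finite := by
  obtain ⟨s, hs, rfl⟩ := hK
  have : Finite s := hs.to_subtype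
  refine Finite.of_finite_image (f := fun x => {g : s | g.1 x = 0}) (toFinite _) ?_
  intro x hx y hy hxy
  by_contra hne
  obtain ⟨hxK, hxext⟩ := mem_extremePoints.1 hx
  -- every constraint is either active at both `x` and `y`, or strict at `x`: so the line through
  -- `x` and `y` stays in the polyhedron near `x`
  have hline : ∀ᶠ t in 𝓝 (0 : ℝ), ∀ g ∈ s, g (AffineMap.lineMap x y t) ≤ 0 := by
    refine (eventually_all_finite hs).2 fun g hg => ?_
    rcases (hxK g hg).lt_or_eq with hgx | hgx
    · have hcont : Continuous fun t : ℝ => g (AffineMap.lineMap x y t) :=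
        g.continuous_of_finiteDimensional.comp AffineMap.lineMap_continuous
      exact (hcont.tendsto 0).eventually_le_const (by simpa using hgx)
    · have hgy : g y = 0 := (Set.ext_iff.1 hxy ⟨g, hg⟩).1 hgx
      refine Eventually.of_forall fun t => ?_
      rw [AffineMap.apply_lineMap, hgx, hgy, AffineMap.lineMap_same_apply]
  obtain ⟨ε, hε, hball⟩ := Metric.eventually_nhds_iff.1 hline
  have hmem : ∀ t, |t| < ε → AffineMap.lineMap x y t ∈ {x : Vn n | ∀ g ∈ s, g x ≤ 0} :=
    fun t ht => hball (by simpa using ht)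
  have hseg : x ∈ openSegment ℝ (AffineMap.lineMap x y (-(ε / 2)))
      (AffineMap.lineMap x y (ε / 2)) :=
    ⟨1 / 2, 1 / 2, by norm_num, by norm_num, by norm_num, by
      simp only [AffineMap.lineMap_apply_module]; module⟩
  have := (hxext _ (hmem _ (by rw [abs_neg, abs_of_pos (half_pos hε)]; linarith))
    _ (hmem _ (by rw [abs_of_pos (half_pos hε)]; linarith)) hseg).2
  rw [AffineMap.lineMap_eq_left_iff] at this
  exact this.elim (fun h => hne h) (fun h => (half_pos hε).ne' h)

theorem isPolytope (hK : IsPolyhedron K) (hKb : Bornology.IsBounded K) (hKne : K.Nonempty) :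
    IsPolytope K := by
  have hfin := hK.finite_extremePoints
  have hhull : convexHull ℝ (K.extremePoints ℝ) = K := by
    rw [← (hfin.isClosed_convexHull (𝕜 := ℝ)).closure_eq, closure_convexHull_extremePoints
      (Metric.isCompact_of_isClosed_isBounded hK.isClosed hKb) hK.convex]
  refine ⟨hfin.toFinset, ?_, by rw [hfin.coe_toFinset, hhull]⟩
  rw [← Finset.coe_nonempty, hfin.coe_toFinset, ← convexHull_nonempty_iff (𝕜 := ℝ), hhull]
  exact hKne

end IsPolyhedron

theorem isPolyhedron_setOf_le (v w : Vn n →ᵃ[ℝ] ℝ) : IsPolyhedron {x | v x ≤ w x} :=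
  ⟨{v - w}, finite_singleton _, by ext x; simp⟩

def cube (R : ℝ) : Set (Vn n) := {x | ∀ i, |x i| ≤ R}

theorem isPolyhedron_cube (R : ℝ) : IsPolyhedron (cube (n := n) R) := by
  let p (i : Fin n) : Vn n →ᵃ[ℝ] ℝ :=
    ((EuclideanSpace.proj i : Vn n →L[ℝ] ℝ) : Vn n →ₗ[ℝ] ℝ).toAffineMap
  let c : Vn n →ᵃ[ℝ] ℝ := AffineMap.const ℝ _ R
  have : cube (n := n) R = ⋂ i, {x | p i x ≤ c x} ∩ {x | (-p i) x ≤ c x} := by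
    ext x
    simp [cube, p, c, abs_le, neg_le, forall_and, and_comm]
  rw [this]
  exact IsPolyhedron.iInter fun i => (isPolyhedron_setOf_le _ _).inter (isPolyhedron_setOf_le _ _)

theorem isBounded_cube (R : ℝ) : Bornology.IsBounded (cube (n := n) R) := by
  refine (Metric.isBounded_iff_subset_closedBall 0).2 ⟨√(n * R ^ 2), fun x hx => ?_⟩
  rw [mem_closedBall_zero_iff, EuclideanSpace.norm_eq]
  gcongr
  calc ∑ i, ‖x i‖ ^ 2 ≤ ∑ _i : Fin n, R ^ 2 := by
        gcongr with i
        exact (Real.norm_eq_abs _).trans_le (hx i)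
    _ = n * R ^ 2 := by simp

theorem zero_mem_cube {R : ℝ} (hR : 0 ≤ R) : (0 : Vn n) ∈ cube R := by
  simp [cube, hR]

theorem eventually_mem_cube (x : Vn n) : ∀ᶠ k : ℕ in atTop, x ∈ cube k := by
  obtain ⟨k, hk⟩ := exists_nat_ge (∑ i, |x i|)
  filter_upwards [eventually_ge_atTop k] with j hj i
  calc |x i| ≤ ∑ i, |x i| :=
        Finset.single_le_sum (fun i _ => abs_nonneg (x i)) (Finset.mem_univ i)
    _ ≤ j := hk.trans (by exact_mod_cast hj)

theorem indE_of_mem {A : Set (Vn n)} {x : Vn n} (hx : x ∈ A) : indE A x = 0 := if_pos hx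

theorem indE_of_notMem {A : Set (Vn n)} {x : Vn n} (hx : x ∉ A) : indE A x = ⊤ := if_neg hx

theorem lowerSemicontinuous_indE {A : Set (Vn n)} (hA : IsClosed A) :
    LowerSemicontinuous (indE A) := by
  have : indE A = Aᶜ.indicator fun _ => ⊤ := by
    ext x
    by_cases hx : x ∈ A <;> simp [indE, hx]
  rw [this]
  exact hA.isOpen_compl.lowerSemicontinuous_indicator le_top

theorem indE_nonneg (A : Set (Vn n)) (x : Vn n) : 0 ≤ indE A x := by
  by_cases hx : x ∈ A <;> simp [indE_of_mem, indE_of_notMem, hx]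

theorem coe_add_indE_mem_convSc {f : Vn n → ℝ} {K : Set (Vn n)} (hf : ConvexOn ℝ K f)
    (hfc : Continuous f) (hK : IsClosed K) (hKb : Bornology.IsBounded K) (hKne : K.Nonempty) :
    (fun x => (f x : EReal) + indE K x) ∈ ConvSc n := by
  refine ⟨⟨fun x y t ht0 ht1 => ?_, ?_, fun x => ?_, ?_⟩, fun M => ?_⟩
  · have ht1' : 0 < 1 - t := sub_pos.2 ht1
    by_cases hx : x ∈ K <;> by_cases hy : y ∈ K
    · simp only [indE_of_mem hx, indE_of_mem hy, indE_of_mem (hf.1 hx hy ht0.le ht1'.le (by ring)),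
        add_zero]
      exact_mod_cast hf.2 hx hy ht0.le ht1'.le (by ring)
    all_goals simp only [indE_of_mem, indE_of_notMem, hx, hy, not_false_eq_true, add_zero,
      EReal.coe_add_top, EReal.coe_mul_top_of_pos ht0, EReal.coe_mul_top_of_pos ht1',
      ← EReal.coe_mul, EReal.top_add_coe, EReal.top_add_top, le_top]
  · exact (continuous_coe_real_ereal.comp hfc).lowerSemicontinuous.add'
      (lowerSemicontinuous_indE hK) fun x =>
        EReal.continuousAt_add (Or.inl (EReal.coe_ne_top _)) (Or.inl (EReal.coe_ne_bot _))
  · by_cases hx : x ∈ K <;> simp [indE_of_mem, indE_of_notMem, hx]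
  · obtain ⟨x, hx⟩ := hKne
    exact ⟨x, by simp [indE_of_mem hx]⟩
  · obtain ⟨C, hC⟩ := isBounded_iff_forall_norm_le.1 hKb
    refine ⟨C + 1, fun x hx => ?_⟩
    have hxK : x ∉ K := fun h => by linarith [hC x h]
    simp [indE_of_notMem hxK]

theorem mem_convScPA_of_finite {ι : Type*} [Finite ι] [Nonempty ι] {u : Vn n → EReal}
    (hu : u ∈ ConvSc n) (P : ι → Set (Vn n)) (w : ι → Vn n →ᵃ[ℝ] ℝ)
    (hP : ∀ i, IsPolytope (P i)) (hPU : IsPolytope (⋃ i, P i))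
    (hdisj : Pairwise fun i j => interior (P i) ∩ interior (P j) = ∅)
    (hu_eq : u = fun x => ⨅ i, ((w i x : EReal) + indE (P i) x)) : u ∈ ConvScPA n := by
  obtain ⟨m, hm⟩ := Nat.exists_eq_succ_of_ne_zero (Nat.card_pos (α := ι)).ne'
  let e : Fin (m + 1) ≃ ι := ((Finite.equivFin ι).trans (finCongr hm)).symm
  refine ⟨hu, m, P ∘ e, w ∘ e, fun i => hP _, ?_, fun i j hij => hdisj (e.injective.ne hij), ?_⟩
  · rwa [Function.comp_def, e.surjective.iUnion_comp]
  · rw [hu_eq]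
    funext x
    exact e.iInf_comp (g := fun i => (w i x : EReal) + indE (P i) x) |>.symm

def cell (K : Set (Vn n)) (W : Finset (Vn n →ᵃ[ℝ] ℝ)) (w : Vn n →ᵃ[ℝ] ℝ) : Set (Vn n) :=
  K ∩ {x | ∀ v ∈ W, v x ≤ w x}

section cell

variable {K : Set (Vn n)} {W : Finset (Vn n →ᵃ[ℝ] ℝ)} {v w : Vn n →ᵃ[ℝ] ℝ}

theorem IsPolyhedron.cell (hK : IsPolyhedron K) (W : Finset (Vn n →ᵃ[ℝ] ℝ))
    (w : Vn n →ᵃ[ℝ] ℝ) : IsPolyhedron (cell K W w) := by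
  have : {x | ∀ v ∈ W, v x ≤ w x} = ⋂ v : W, {x | v.1 x ≤ w x} := by ext; simp
  exact hK.inter (this ▸ IsPolyhedron.iInter fun v => isPolyhedron_setOf_le _ _)

theorem exists_mem_cell (hW : W.Nonempty) {x : Vn n} (hx : x ∈ K) : ∃ w ∈ W, x ∈ cell K W w := by
  obtain ⟨w, hw, hmax⟩ := W.exists_max_image (fun v => v x) hW
  exact ⟨w, hw, hx, hmax⟩

theorem sup'_eq_of_mem_cell (hW : W.Nonempty) (hw : w ∈ W) {x : Vn n} (hx : x ∈ cell K W w) :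
    W.sup' hW (fun v => v x) = w x :=
  le_antisymm (Finset.sup'_le _ _ hx.2) (Finset.le_sup' (fun v => v x) hw)

theorem interior_cell_inter_interior_cell (hv : v ∈ W) (hw : w ∈ W) (hvw : v ≠ w) :
    interior (cell K W v) ∩ interior (cell K W w) = ∅ := by
  by_contra h
  refine hvw (AffineMap.ext_on ((isOpen_interior.inter isOpen_interior).affineSpan_eq_top
    (nonempty_iff_ne_empty.2 h)) fun x hx => ?_)
  exact le_antisymm ((interior_subset hx.2).2 v hv) ((interior_subset hx.1).2 w hw)

end cell

theorem convexOn_sup'_affine {K : Set (Vn n)} (hK : Convex ℝ K) {W : Finset (Vn n →ᵃ[ℝ] ℝ)}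
    (hW : W.Nonempty) : ConvexOn ℝ K (W.sup' hW fun v => ⇑v) :=
  Finset.sup'_induction hW _ (fun _ hf _ hg => hf.sup hg) fun _ _ =>
    ⟨hK, fun _ _ _ _ _ _ _ _ hab => (Convex.combo_affine_apply hab).le⟩

theorem continuous_sup'_affine {W : Finset (Vn n →ᵃ[ℝ] ℝ)} (hW : W.Nonempty) :
    Continuous (W.sup' hW fun v => ⇑v) :=
  Finset.sup'_induction hW _ (fun _ hf _ hg => hf.sup' hg) fun v _ =>
    v.continuous_of_finiteDimensional

theorem sup'_add_indE_mem_convScPA {K : Set (Vn n)} (hK : IsPolyhedron K)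
    (hKb : Bornology.IsBounded K) (hKne : K.Nonempty) {W : Finset (Vn n →ᵃ[ℝ] ℝ)}
    (hW : W.Nonempty) :
    (fun x => (W.sup' hW (fun v => ⇑v) x : EReal) + indE K x) ∈ ConvScPA n := by
  let S : Set (Vn n →ᵃ[ℝ] ℝ) := {w | w ∈ W ∧ (cell K W w).Nonempty}
  have : Finite S := (W.finite_toSet.subset fun w hw => hw.1).to_subtype
  have hcover : ⋃ w : S, cell K W w = K := by
    refine Subset.antisymm (iUnion_subset fun w => inter_subset_left) fun x hx => ?_
    obtain ⟨w, hw, hxw⟩ := exists_mem_cell hW hx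
    exact mem_iUnion.2 ⟨⟨w, hw, x, hxw⟩, hxw⟩
  have : Nonempty S := by
    obtain ⟨x, hx⟩ := hKne
    obtain ⟨w, hw, hxw⟩ := exists_mem_cell hW hx
    exact ⟨w, hw, x, hxw⟩
  refine mem_convScPA_of_finite
    (coe_add_indE_mem_convSc (convexOn_sup'_affine hK.convex hW) (continuous_sup'_affine hW)
      hK.isClosed hKb hKne)
    (fun w : S => cell K W w) (fun w : S => w.1)
    (fun w => (hK.cell W w).isPolytope (hKb.subset inter_subset_left) w.2.2)
    (by rw [hcover]; exact hK.isPolytope hKb hKne)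
    (fun v w hvw => interior_cell_inter_interior_cell v.2.1 w.2.1 (Subtype.coe_injective.ne hvw))
    ?_
  funext x
  rw [Finset.sup'_apply]
  by_cases hx : x ∈ K
  · obtain ⟨w, hw, hxw⟩ := exists_mem_cell hW hx
    refine le_antisymm (le_iInf fun v => ?_) (iInf_le_of_le ⟨w, hw, x, hxw⟩ ?_)
    · by_cases hxv : x ∈ cell K W v
      · simp [indE_of_mem hx, indE_of_mem hxv, sup'_eq_of_mem_cell hW v.2.1 hxv]
      · simp [indE_of_notMem hxv]
    · simp [indE_of_mem hx, indE_of_mem hxw, sup'_eq_of_mem_cell hW hw hxw]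
  · have hxv : ∀ v : S, x ∉ cell K W v := fun v h => hx h.1
    simp [indE_of_notMem hx, indE_of_notMem (hxv _)]

theorem epiConverges_add_indE {u : Vn n → EReal} {v : ℕ → Vn n → ℝ}
    (hv : ∀ k, Continuous (v k)) (hmono : Monotone v) (hsup : ∀ x, ⨆ k, (v k x : EReal) = u x)
    {K : ℕ → Set (Vn n)} (hK : ∀ x, ∀ᶠ k in atTop, x ∈ K k) :
    EpiConverges (fun k x => (v k x : EReal) + indE (K k) x) u := by
  intro x
  constructor
  · intro xk hxk
    rw [← hsup x]
    refine iSup_le fun j => ?_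
    have hlim : Tendsto (fun k => (v j (xk k) : EReal)) atTop (𝓝 (v j x)) :=
      (continuous_coe_real_ereal.tendsto _).comp (((hv j).tendsto x).comp hxk)
    rw [← hlim.liminf_eq]
    refine liminf_le_liminf (eventually_atTop.2 ⟨j, fun k hk => ?_⟩)
    exact (EReal.coe_le_coe_iff.2 (hmono hk (xk k))).trans
      (le_add_of_nonneg_right (indE_nonneg _ _))
  · refine ⟨fun _ => x, tendsto_const_nhds, ?_⟩
    have hlim : Tendsto (fun k => (v k x : EReal)) atTop (𝓝 (u x)) :=
      hsup x ▸ tendsto_atTop_iSup fun k l hkl => EReal.coe_le_coe_iff.2 (hmono hkl x)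
    exact hlim.congr' ((hK x).mono fun k hk => by simp [indE_of_mem hk])

/-- **Approximation in `Conv_sc(ℝⁿ)` by piecewise affine functions**
(Corollary 2.5): every `u ∈ Conv_sc(ℝⁿ)` is the epi-limit of a sequence in
`Conv_sc^{pa}(ℝⁿ)`. -/
theorem approx_piecewise_affine_sc (n : ℕ) (u : Vn n → EReal)
    (hu : u ∈ ConvSc n) :
    ∃ uk : ℕ → Vn n → EReal,
      (∀ k, uk k ∈ ConvScPA n) ∧ EpiConverges uk u := by
  obtain ⟨W, hW, hmono, hsup⟩ := exists_finset_affine_iSup_sup'_eq hu.1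
  exact ⟨fun k x => ((W k).sup' (hW k) (fun v => ⇑v) x : EReal) + indE (cube k) x,
    fun k => sup'_add_indE_mem_convScPA (isPolyhedron_cube _) (isBounded_cube _)
      ⟨0, zero_mem_cube k.cast_nonneg⟩ (hW k),
    epiConverges_add_indE (fun k => continuous_sup'_affine (hW k))
      (fun k l hkl => Finset.sup'_mono _ (hmono hkl) _)
      (fun x => by simpa only [Finset.sup'_apply] using hsup x) eventually_mem_cube⟩
end
end

section
/- Let u_k, u ∈ Conv_coe(ℝⁿ). Then u_k epi-converges to u if and only if for every t ∈ ℝ with t ≠ min_{x∈ℝⁿ} u(x) the sublevel sets converge: {u_k ≤ t} → {u ≤ t}, meaning that if {u ≤ t} = ∅ then {u_k ≤ t} = ∅ for all sufficiently large k, and if {u ≤ t} ≠ ∅ then {u_k ≤ t} ≠ ∅ for all sufficiently large k and the Hausdorff distance between {u_k ≤ t} and {u ≤ t} tends to 0. -/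
open Filter Topology MeasureTheory

noncomputable section

/-- `Conv_coe(ℝⁿ)`: coercive elements of `Conv(ℝⁿ)`, i.e.
`u(x) → +∞` as `|x| → +∞`. -/
def ConvCoe (n : ℕ) : Set (Vn n → EReal) :=
  {u | u ∈ ConvSet n ∧
    ∀ M : ℝ, ∃ R : ℝ, ∀ x : Vn n, R ≤ ‖x‖ → (M : EReal) ≤ u x}
/-! Hausdorff convergence of bounded sets `B_k → A` amounts to: for every `ε > 0`, eventually
`B_k` lies in the `ε`-thickening of `A` and `A` in that of `B_k`.

If `u_k` epi-converges to `u`, the liminf inequality and compactness give: if `u > t` on a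
compact set `K`, then eventually `u_k > t` on `K`. Take `K` a sphere about a point where `u < t`:
the convex set `{u_k ≤ t}` meets the inside of the sphere (by a recovery sequence) but cannot
cross it, so the sets `{u_k ≤ t}` are eventually uniformly bounded, and a limit-point argument
puts them close to `{u ≤ t}`. For the reverse inclusion, when `t > min u` convexity makes every
point of `{u ≤ t}` a limit of points where `u < t`, and those are approached by recovery
sequences.

Conversely, the liminf inequality at `x` follows by separating `x` from the closed set
`{u ≤ t}` for a level `liminf u_k(x_k) < t < u(x)` different from `min u`, and a recovery
sequence is assembled by a diagonal argument from points of `{u_k ≤ t}` close to `x`, for levels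
`t` decreasing to `u(x)`. -/

open Metric Set Bornology

section PseudoMetric

variable {X : Type*} [PseudoMetricSpace X]

def HausdorffConverges (B : ℕ → Set X) (A : Set X) : Prop :=
  (A = ∅ → ∀ᶠ k in atTop, B k = ∅) ∧
    (A.Nonempty → (∀ᶠ k in atTop, (B k).Nonempty) ∧
      Tendsto (fun k => hausdorffDist (B k) A) atTop (𝓝 0))

theorem hausdorffConverges_iff {B : ℕ → Set X} {A : Set X} (hA : IsBounded A)
    (hB : ∀ k, IsBounded (B k)) :
    HausdorffConverges B A ↔
      ∀ ε > 0, ∀ᶠ k in atTop, B k ⊆ thickening ε A ∧ A ⊆ thickening ε (B k) := by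
  rcases A.eq_empty_or_nonempty with rfl | hA₀
  · simp only [HausdorffConverges, thickening_empty, subset_empty_iff, empty_subset, and_true,
      Set.not_nonempty_empty, IsEmpty.forall_iff, forall_const]
    exact ⟨fun h _ _ => h, fun h => h 1 one_pos⟩
  simp only [HausdorffConverges, hA₀.ne_empty, hA₀, IsEmpty.forall_iff, forall_const, true_and]
  constructor
  · rintro ⟨hne, hlim⟩ ε hε
    filter_upwards [hne, hlim.eventually (gt_mem_nhds hε)] with k hBk hlt
    have hfin := hausdorffEDist_ne_top_of_nonempty_of_bounded hBk hA₀ (hB k) hA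
    refine ⟨fun x hx => mem_thickening_iff.2 (exists_dist_lt_of_hausdorffDist_lt hx hlt hfin),
      fun y hy => mem_thickening_iff.2 ?_⟩
    obtain ⟨x, hx, hxy⟩ := exists_dist_lt_of_hausdorffDist_lt' hy hlt hfin
    exact ⟨x, hx, by rwa [dist_comm]⟩
  · intro h
    refine ⟨(h 1 one_pos).mono fun k hk => ?_, tendsto_order.2
      ⟨fun a ha => Eventually.of_forall fun k => ha.trans_le hausdorffDist_nonneg,
        fun ε hε => ?_⟩⟩
    · obtain ⟨y, hy⟩ := hA₀
      obtain ⟨x, hx, -⟩ := mem_thickening_iff.1 (hk.2 hy)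
      exact ⟨x, hx⟩
    · filter_upwards [h (ε / 2) (half_pos hε)] with k hk
      refine (hausdorffDist_le_of_mem_dist (half_pos hε).le (fun x hx => ?_)
        (fun y hy => ?_)).trans_lt (half_lt_self hε)
      · obtain ⟨y, hy, hxy⟩ := mem_thickening_iff.1 (hk.1 hx)
        exact ⟨y, hy, hxy.le⟩
      · obtain ⟨x, hx, hxy⟩ := mem_thickening_iff.1 (hk.2 hy)
        exact ⟨x, hx, hxy.le⟩

theorem IsPreconnected.subset_ball_of_disjoint_sphere {C : Set X} (hC : IsPreconnected C)
    {y : X} {r : ℝ} (hmeet : (C ∩ ball y r).Nonempty) (hdisj : Disjoint C (sphere y r)) :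
    C ⊆ ball y r := by
  intro x hx
  obtain ⟨z, hzC, hz⟩ := hmeet
  by_contra hxr
  obtain ⟨w, hwC, hw⟩ := hC.intermediate_value hzC hx
    (continuous_id.dist continuous_const).continuousOn
    ⟨(mem_ball.1 hz).le, not_lt.1 (mem_ball.not.1 hxr)⟩
  exact hdisj.ne_of_mem hwC (mem_sphere.2 hw) rfl

theorem exists_seq_forall_eventually {α : Type*} {p : ℕ → ℕ → α → Prop}
    (hp : ∀ k a, Antitone fun j => p j k a) (h : ∀ j, ∀ᶠ k in atTop, ∃ a, p j k a) :
    ∃ f : ℕ → α, ∀ j, ∀ᶠ k in atTop, p j k (f k) := by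
  classical
  obtain ⟨-, a₀, -⟩ := (h 0).exists
  -- at time `k`, use a witness for the largest index `j ≤ k` that has one
  let P k j := ∃ a, p j k a
  let J k := Nat.findGreatest (P k) k
  refine ⟨fun k => if hk : P k (J k) then hk.choose else a₀, fun j => ?_⟩
  filter_upwards [h j, eventually_ge_atTop j] with k hjk' hjk
  have hJ : P k (J k) := Nat.findGreatest_spec (P := P k) hjk hjk'
  rw [dif_pos hJ]
  exact hp k _ (Nat.le_findGreatest (P := P k) hjk hjk') hJ.choose_spec

variable {uk : ℕ → X → EReal} {u : X → EReal}

theorem exists_tendsto_limsup_le {x : X} {a : EReal}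
    (h : ∀ s > a, ∀ ε > 0, ∀ᶠ k in atTop, ∃ w, dist w x < ε ∧ uk k w ≤ s) :
    ∃ xk : ℕ → X, Tendsto xk atTop (𝓝 x) ∧
      limsup (fun k => uk k (xk k)) atTop ≤ a := by
  rcases eq_or_ne a ⊤ with rfl | ha
  · exact ⟨fun _ => x, tendsto_const_nhds, le_top⟩
  obtain ⟨s, hs_anti, hs_mem, hs_lim⟩ := exists_seq_strictAnti_tendsto' (lt_top_iff_ne_top.2 ha)
  obtain ⟨ε, hε_anti, hε_pos, hε_lim⟩ := exists_seq_strictAnti_tendsto (0 : ℝ)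
  obtain ⟨xk, hxk⟩ := exists_seq_forall_eventually
    (p := fun j k w => dist w x < ε j ∧ uk k w ≤ s j)
    (fun _ _ _ _ hij h =>
      ⟨h.1.trans_le (hε_anti.antitone hij), h.2.trans (hs_anti.antitone hij)⟩)
    (fun j => h (s j) (hs_mem j).1 (ε j) (hε_pos j))
  refine ⟨xk, Metric.tendsto_nhds.2 fun δ hδ => ?_, ge_of_tendsto hs_lim
    (Eventually.of_forall fun j => limsup_le_of_le (by isBoundedDefault) ((hxk j).mono
      fun _ hk => hk.2))⟩
  obtain ⟨j, hj⟩ := (hε_lim.eventually (gt_mem_nhds hδ)).exists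
  exact (hxk j).mono fun _ hk => hk.1.trans hj

theorem le_liminf_comp_of_strictMono {x : X}
    (hlim : ∀ xk : ℕ → X, Tendsto xk atTop (𝓝 x) →
      u x ≤ liminf (fun k => uk k (xk k)) atTop)
    {σ : ℕ → ℕ} (hσ : StrictMono σ) {y : ℕ → X} (hy : Tendsto y atTop (𝓝 x)) :
    u x ≤ liminf (fun j => uk (σ j) (y j)) atTop := by
  set xk := Function.extend σ y fun _ => x
  have hxk : Tendsto xk atTop (𝓝 x) := by
    intro U hU
    obtain ⟨J, hJ⟩ := eventually_atTop.1 (hy hU)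
    refine eventually_atTop.2 ⟨σ J, fun k hk => ?_⟩
    by_cases hk' : ∃ j, σ j = k
    · obtain ⟨j, rfl⟩ := hk'
      simpa only [xk, hσ.injective.extend_apply] using hJ j (hσ.le_iff_le.1 hk)
    · simpa only [xk, Function.extend_apply' _ _ _ hk'] using mem_of_mem_nhds hU
  calc u x ≤ liminf (fun k => uk k (xk k)) atTop := hlim xk hxk
    _ ≤ liminf ((fun k => uk k (xk k)) ∘ σ) atTop := hσ.tendsto_atTop.liminf_le_liminf_comp
    _ = liminf (fun j => uk (σ j) (y j)) atTop := by
      simp only [Function.comp_def, xk, hσ.injective.extend_apply]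

theorem eventually_forall_lt_of_isCompact
    (hlim : ∀ x (xk : ℕ → X), Tendsto xk atTop (𝓝 x) →
      u x ≤ liminf (fun k => uk k (xk k)) atTop)
    {K : Set X} (hK : IsCompact K) {t : EReal} (ht : ∀ x ∈ K, t < u x) :
    ∀ᶠ k in atTop, ∀ x ∈ K, t < uk k x := by
  by_contra hfreq
  simp only [not_eventually, not_forall, not_lt] at hfreq
  obtain ⟨φ, hφ, hφK⟩ := extraction_of_frequently_atTop hfreq
  choose p hpK hpt using hφK
  obtain ⟨z, hzK, ψ, hψ, hpz⟩ := hK.tendsto_subseq hpK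
  have hz := le_liminf_comp_of_strictMono (hlim z) (hφ.comp hψ) hpz
  exact (ht z hzK).not_ge (hz.trans
    (liminf_le_of_frequently_le' (Frequently.of_forall fun j => hpt (ψ j))))

theorem le_liminf_of_eventually_subset_thickening
    (hu : ∀ t : ℝ, IsClosed (u ⁻¹' Iic (t : EReal)))
    (H : ∀ t : ℝ, (t : EReal) ≠ ⨅ x, u x → ∀ ε > 0,
      ∀ᶠ k in atTop, uk k ⁻¹' Iic (t : EReal) ⊆ thickening ε (u ⁻¹' Iic (t : EReal)))
    {x : X} {xk : ℕ → X} (hxk : Tendsto xk atTop (𝓝 x)) :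
    u x ≤ liminf (fun k => uk k (xk k)) atTop := by
  by_contra! hlt
  obtain ⟨t, hLt, htx, ht⟩ : ∃ t : ℝ, liminf (fun k => uk k (xk k)) atTop < t ∧
      (t : EReal) < u x ∧ (t : EReal) ≠ ⨅ x, u x := by
    obtain ⟨a, hLa, hax⟩ := EReal.exists_between_coe_real hlt
    obtain ⟨b, hab, hbx⟩ := EReal.exists_between_coe_real hax
    by_cases ha : (a : EReal) = ⨅ x, u x
    · exact ⟨b, hLa.trans hab, hbx, ha ▸ hab.ne'⟩
    · exact ⟨a, hLa, hax, ha⟩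
  obtain ⟨δ, hδ, hball⟩ := Metric.isOpen_iff.1 (hu t).isOpen_compl x htx.not_ge
  obtain ⟨k, hk, hBk, hdist⟩ :=
    ((frequently_lt_of_liminf_lt (by isBoundedDefault) hLt).and_eventually
      ((H t ht _ (half_pos hδ)).and (Metric.tendsto_nhds.1 hxk _ (half_pos hδ)))).exists
  obtain ⟨y, hy, hxy⟩ := mem_thickening_iff.1 (hBk hk.le)
  exact hball (mem_ball.2 (by linarith [dist_triangle y (xk k) x, dist_comm y (xk k)])) hy

theorem exists_tendsto_of_eventually_subset_thickening {x : X}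
    (hlim : ∀ xk : ℕ → X, Tendsto xk atTop (𝓝 x) →
      u x ≤ liminf (fun k => uk k (xk k)) atTop)
    (H : ∀ t : ℝ, (t : EReal) ≠ ⨅ x, u x → ∀ ε > 0,
      ∀ᶠ k in atTop, u ⁻¹' Iic (t : EReal) ⊆ thickening ε (uk k ⁻¹' Iic (t : EReal))) :
    ∃ xk : ℕ → X, Tendsto xk atTop (𝓝 x) ∧
      Tendsto (fun k => uk k (xk k)) atTop (𝓝 (u x)) := by
  obtain ⟨xk, hxk, hsup⟩ := exists_tendsto_limsup_le (uk := uk) (x := x) (a := u x)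
    fun s hs ε hε => by
      obtain ⟨t, hxt, hts⟩ := EReal.exists_between_coe_real hs
      filter_upwards [H t ((iInf_le u x).trans_lt hxt).ne' ε hε] with k hk
      obtain ⟨w, hw, hxw⟩ := mem_thickening_iff.1 (hk hxt.le)
      exact ⟨w, by rwa [dist_comm], le_trans hw hts.le⟩
  exact ⟨xk, hxk, tendsto_of_le_liminf_of_limsup_le (hlim xk hxk) hsup⟩

end PseudoMetric

section Euclidean

variable {n : ℕ} {uk : ℕ → Vn n → EReal} {u : Vn n → EReal}

theorem isClosed_sublevel_of_mem_convCoe (hu : u ∈ ConvCoe n) (t : ℝ) :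
    IsClosed (u ⁻¹' Iic (t : EReal)) :=
  hu.1.2.1.isClosed_preimage t

theorem isBounded_sublevel_of_mem_convCoe (hu : u ∈ ConvCoe n) (t : ℝ) :
    IsBounded (u ⁻¹' Iic (t : EReal)) := by
  obtain ⟨R, hR⟩ := hu.2 (t + 1)
  refine isBounded_iff_forall_norm_le.2 ⟨R, fun x hx => le_of_not_ge fun hRx => ?_⟩
  have : ((t + 1 : ℝ) : EReal) ≤ t := (hR x hRx).trans hx
  norm_cast at this
  linarith

theorem isCompact_sublevel_of_mem_convCoe (hu : u ∈ ConvCoe n) (t : ℝ) :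
    IsCompact (u ⁻¹' Iic (t : EReal)) :=
  isCompact_of_isClosed_isBounded (isClosed_sublevel_of_mem_convCoe hu t)
    (isBounded_sublevel_of_mem_convCoe hu t)

theorem IsConvexFn.apply_smul_add_smul_le (hu : IsConvexFn u) {x y : Vn n} {a b s : ℝ}
    (hx : u x ≤ a) (hy : u y ≤ b) (hs₀ : 0 < s) (hs₁ : s < 1) :
    u (s • x + (1 - s) • y) ≤ ((s * a + (1 - s) * b : ℝ) : EReal) :=
  calc u (s • x + (1 - s) • y) ≤ (s : EReal) * u x + ((1 - s : ℝ) : EReal) * u y :=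
        hu x y s hs₀ hs₁
    _ ≤ (s : EReal) * a + ((1 - s : ℝ) : EReal) * b :=
        add_le_add (mul_le_mul_of_nonneg_left hx (by exact_mod_cast hs₀.le))
          (mul_le_mul_of_nonneg_left hy (by exact_mod_cast (sub_pos.2 hs₁).le))
    _ = ((s * a + (1 - s) * b : ℝ) : EReal) := by push_cast; rfl

theorem IsConvexFn.convex_sublevel (hu : IsConvexFn u) (t : ℝ) :
    Convex ℝ (u ⁻¹' Iic (t : EReal)) := by
  refine convex_iff_forall_pos.2 fun x hx y hy a b ha hb hab => ?_
  obtain rfl : b = 1 - a := by linarith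
  refine (hu.apply_smul_add_smul_le hx hy ha (by linarith)).trans_eq ?_
  congr 1
  ring

theorem IsConvexFn.sublevel_subset_closure (hu : IsConvexFn u) {y : Vn n} {t : ℝ}
    (hy : u y < t) : u ⁻¹' Iic (t : EReal) ⊆ closure (u ⁻¹' Iio (t : EReal)) := by
  intro x hx
  obtain ⟨a, hya, hat⟩ := EReal.exists_between_coe_real hy
  have hat : a < t := EReal.coe_lt_coe_iff.1 hat
  have hlim : Tendsto (fun s : ℝ => s • y + (1 - s) • x) (𝓝[>] 0) (𝓝 x) := by
    have : Continuous fun s : ℝ => s • y + (1 - s) • x := by fun_prop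
    simpa using (this.tendsto 0).mono_left nhdsWithin_le_nhds
  refine mem_closure_of_tendsto hlim ?_
  filter_upwards [Ioo_mem_nhdsGT one_pos] with s ⟨hs₀, hs₁⟩
  refine (hu.apply_smul_add_smul_le hya.le hx hs₀ hs₁).trans_lt ?_
  exact_mod_cast (by nlinarith : s * a + (1 - s) * t < t)

theorem EpiConverges.eventually_mem_thickening (hepi : EpiConverges uk u) {y : Vn n} {t : ℝ}
    (hy : u y < t) {ε : ℝ} (hε : 0 < ε) :
    ∀ᶠ k in atTop, y ∈ thickening ε (uk k ⁻¹' Iic (t : EReal)) := by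
  obtain ⟨yk, hyk, hval⟩ := (hepi y).2
  filter_upwards [hval.eventually (gt_mem_nhds hy), Metric.tendsto_nhds.1 hyk ε hε]
    with k hk hdist
  exact mem_thickening_iff.2 ⟨yk k, hk.le, by rwa [dist_comm]⟩

theorem EpiConverges.exists_eventually_sublevel_subset_ball (hepi : EpiConverges uk u)
    (hk : ∀ k, IsConvexFn (uk k)) {t : ℝ} (hu : IsBounded (u ⁻¹' Iic (t : EReal)))
    {y : Vn n} (hy : u y < t) :
    ∃ r, ∀ᶠ k in atTop, uk k ⁻¹' Iic (t : EReal) ⊆ ball y r := by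
  obtain ⟨r, hr⟩ := hu.subset_ball y
  have hsphere : ∀ᶠ k in atTop, ∀ x ∈ sphere y r, (t : EReal) < uk k x :=
    eventually_forall_lt_of_isCompact (fun x => (hepi x).1) (isCompact_sphere y r)
      fun x hx => not_le.1 fun hxt => (mem_ball.1 (hr hxt)).ne (mem_sphere.1 hx)
  refine ⟨r, ?_⟩
  filter_upwards [hsphere, hepi.eventually_mem_thickening hy (pos_of_mem_ball (hr hy.le))]
    with k hsph hyk
  obtain ⟨z, hz, hyz⟩ := mem_thickening_iff.1 hyk
  exact ((hk k).convex_sublevel t).isPreconnected.subset_ball_of_disjoint_sphere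
    ⟨z, hz, by rwa [mem_ball, dist_comm]⟩
    (disjoint_left.2 fun x hx hxs => (hsph x hxs).not_ge hx)

theorem EpiConverges.eventually_sublevel_subset_thickening (hepi : EpiConverges uk u)
    (hk : ∀ k, IsConvexFn (uk k)) (hu : u ∈ ConvCoe n) (t : ℝ) {ε : ℝ} (hε : 0 < ε) :
    ∀ᶠ k in atTop,
      uk k ⁻¹' Iic (t : EReal) ⊆ thickening ε (u ⁻¹' Iic (t : EReal)) := by
  obtain ⟨y, hy⟩ := hu.1.2.2.2
  obtain ⟨t', hyt', -⟩ := EReal.exists_between_coe_real (lt_top_iff_ne_top.2 hy)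
  obtain ⟨r, hr⟩ := hepi.exists_eventually_sublevel_subset_ball hk
    (isBounded_sublevel_of_mem_convCoe hu (max t t'))
    (hyt'.trans_le (by exact_mod_cast le_max_right t t'))
  have hK : ∀ᶠ k in atTop, ∀ x ∈ closedBall y r \ thickening ε (u ⁻¹' Iic (t : EReal)),
      (t : EReal) < uk k x :=
    eventually_forall_lt_of_isCompact (fun x => (hepi x).1)
      ((isCompact_closedBall y r).diff isOpen_thickening)
      fun x hx => not_le.1 fun hxt => hx.2 (self_subset_thickening hε _ hxt)
  filter_upwards [hr, hK] with k hkr hkK x hx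
  by_contra hxA
  have hxr : x ∈ closedBall y r :=
    ball_subset_closedBall <| hkr <| show uk k x ≤ ((max t t' : ℝ) : EReal) from
      le_trans hx (by exact_mod_cast le_max_left t t')
  exact (hkK x ⟨hxr, hxA⟩).not_ge hx

theorem EpiConverges.eventually_subset_thickening_sublevel (hepi : EpiConverges uk u)
    (hu : IsConvexFn u) {t : ℝ} (hA : IsCompact (u ⁻¹' Iic (t : EReal))) {y : Vn n}
    (hy : u y < t) {ε : ℝ} (hε : 0 < ε) :
    ∀ᶠ k in atTop,
      u ⁻¹' Iic (t : EReal) ⊆ thickening ε (uk k ⁻¹' Iic (t : EReal)) := by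
  have hcover :
      u ⁻¹' Iic (t : EReal) ⊆ ⋃ z ∈ u ⁻¹' Iio (t : EReal), ball z (ε / 2) := by
    intro x hx
    obtain ⟨z, hz, hxz⟩ :=
      Metric.mem_closure_iff.1 (hu.sublevel_subset_closure hy hx) (ε / 2) (half_pos hε)
    exact mem_iUnion₂.2 ⟨z, hz, mem_ball.2 hxz⟩
  obtain ⟨S, hS, hSfin, hAS⟩ := hA.elim_finite_subcover_image (fun _ _ => isOpen_ball) hcover
  filter_upwards [(eventually_all_finite hSfin).2
    fun z hz => hepi.eventually_mem_thickening (hS hz) (half_pos hε)] with k hk x hx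
  obtain ⟨z, hzS, hxz⟩ := mem_iUnion₂.1 (hAS hx)
  obtain ⟨w, hw, hzw⟩ := mem_thickening_iff.1 (hk z hzS)
  exact mem_thickening_iff.2 ⟨w, hw, by linarith [dist_triangle x z w, mem_ball.1 hxz]⟩

theorem EpiConverges.eventually_sublevels_thickening (hepi : EpiConverges uk u)
    (hk : ∀ k, uk k ∈ ConvCoe n) (hu : u ∈ ConvCoe n) {t : ℝ}
    (ht : (t : EReal) ≠ ⨅ x, u x) {ε : ℝ} (hε : 0 < ε) :
    ∀ᶠ k in atTop, uk k ⁻¹' Iic (t : EReal) ⊆ thickening ε (u ⁻¹' Iic (t : EReal)) ∧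
      u ⁻¹' Iic (t : EReal) ⊆ thickening ε (uk k ⁻¹' Iic (t : EReal)) := by
  refine (hepi.eventually_sublevel_subset_thickening (fun k => (hk k).1.1) hu t hε).and ?_
  rcases (u ⁻¹' Iic (t : EReal)).eq_empty_or_nonempty with hA | ⟨x, hx⟩
  · simp [hA]
  obtain ⟨y, hy⟩ := iInf_lt_iff.1 (((iInf_le u x).trans hx).lt_of_ne ht.symm)
  exact hepi.eventually_subset_thickening_sublevel hu.1.1
    (isCompact_sublevel_of_mem_convCoe hu t) hy hε

end Euclidean

/-- **Epi-convergence versus Hausdorff convergence of sublevel sets**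
(Lemma 2.2): for coercive convex functions, `u_k` epi-converges to `u` if and
only if for every `t ∈ ℝ` different from the minimum of `u`, the sublevel
sets `{u_k ≤ t}` converge to `{u ≤ t}` (empty sets eventually if
`{u ≤ t} = ∅`; otherwise eventually nonempty with Hausdorff distance
tending to `0`). -/
theorem epiConvergence_iff_sublevel_convergence (n : ℕ)
    (uk : ℕ → Vn n → EReal) (u : Vn n → EReal)
    (hk : ∀ k, uk k ∈ ConvCoe n) (hu : u ∈ ConvCoe n) :
    EpiConverges uk u ↔
      ∀ t : ℝ, (t : EReal) ≠ (⨅ x : Vn n, u x) →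
        ({x : Vn n | u x ≤ (t : EReal)} = ∅ →
            ∀ᶠ k in atTop, {x : Vn n | uk k x ≤ (t : EReal)} = ∅) ∧
        ({x : Vn n | u x ≤ (t : EReal)}.Nonempty →
            (∀ᶠ k in atTop, {x : Vn n | uk k x ≤ (t : EReal)}.Nonempty) ∧
            Tendsto (fun k => Metric.hausdorffDist
                {x : Vn n | uk k x ≤ (t : EReal)} {x : Vn n | u x ≤ (t : EReal)})
              atTop (𝓝 0)) := by
  -- for `t ≠ ⨅ u`, the right-hand side is `HausdorffConverges {uk · ≤ t} {u ≤ t}`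
  have hconv (t : ℝ) := hausdorffConverges_iff (isBounded_sublevel_of_mem_convCoe hu t)
    fun k => isBounded_sublevel_of_mem_convCoe (hk k) t
  refine ⟨fun hepi t ht => (hconv t).2 fun ε hε =>
    hepi.eventually_sublevels_thickening hk hu ht hε, fun H => ?_⟩
  have H' (t : ℝ) (ht : (t : EReal) ≠ ⨅ x, u x) := (hconv t).1 (H t ht)
  have hlim (x : Vn n) (xk : ℕ → Vn n) (hxk : Tendsto xk atTop (𝓝 x)) :=
    le_liminf_of_eventually_subset_thickening (isClosed_sublevel_of_mem_convCoe hu)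
      (fun t ht ε hε => (H' t ht ε hε).mono fun _ h => h.1) hxk
  exact fun x => ⟨hlim x, exists_tendsto_of_eventually_subset_thickening (hlim x)
    fun t ht ε hε => (H' t ht ε hε).mono fun _ h => h.2⟩
end
end

section
/- If Z : Conv(ℝⁿ;ℝ) → ℝ is a continuous and dually epi-translation invariant valuation that is homogeneous of degree 1, then Z is additive, i.e. Z(α v + β w) = α Z(v) + β Z(w) for all α, β ≥ 0 and all v, w ∈ Conv(ℝⁿ;ℝ). -/
open Filter Topology MeasureTheory

noncomputable section

/-- `Conv(ℝⁿ;ℝ)`: finite-valued convex functions on `ℝⁿ`. -/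
def ConvFin (n : ℕ) : Set (Vn n → ℝ) := {v | ConvexOn ℝ Set.univ v}

/-- Epi-convergence of a sequence of real-valued functions
(the lower bound condition is stated in `EReal` so that the `liminf` is the
honest extended-real lower limit). -/
def EpiConvergesR {n : ℕ} (vk : ℕ → Vn n → ℝ) (v : Vn n → ℝ) : Prop :=
  ∀ x : Vn n,
    (∀ xk : ℕ → Vn n, Tendsto xk atTop (𝓝 x) →
      (v x : EReal) ≤ liminf (fun k => ((vk k (xk k) : ℝ) : EReal)) atTop) ∧
    (∃ xk : ℕ → Vn n, Tendsto xk atTop (𝓝 x) ∧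
      Tendsto (fun k => vk k (xk k)) atTop (𝓝 (v x)))

/-- Continuity (with respect to epi-convergence) of a functional on a class `X`. -/
def ContinuousValR {n : ℕ} (X : Set (Vn n → ℝ)) (Z : (Vn n → ℝ) → ℝ) : Prop :=
  ∀ (vk : ℕ → Vn n → ℝ) (v : Vn n → ℝ),
    (∀ k, vk k ∈ X) → v ∈ X → EpiConvergesR vk v →
      Tendsto (fun k => Z (vk k)) atTop (𝓝 (Z v))

/-- The valuation property on a class `X` (here `⊔`, `⊓` are the pointwise
maximum and minimum). -/
def IsValuationR {n : ℕ} (X : Set (Vn n → ℝ)) (Z : (Vn n → ℝ) → ℝ) : Prop :=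
  ∀ u v : Vn n → ℝ, u ∈ X → v ∈ X → u ⊔ v ∈ X → u ⊓ v ∈ X →
    Z (u ⊔ v) + Z (u ⊓ v) = Z u + Z v

/-- Dual epi-translation invariance: invariance under addition of affine
functions `v ↦ v + ℓ + c`. -/
def DuallyEpiTranslationInvariant {n : ℕ} (X : Set (Vn n → ℝ)) (Z : (Vn n → ℝ) → ℝ) : Prop :=
  ∀ v ∈ X, ∀ ℓ : Vn n →ₗ[ℝ] ℝ, ∀ c : ℝ, Z (fun x => v x + ℓ x + c) = Z v

/-- Dual translation invariance: invariance under addition of linear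
functions `v ↦ v + ℓ`. -/
def DuallyTranslationInvariant {n : ℕ} (X : Set (Vn n → ℝ)) (Z : (Vn n → ℝ) → ℝ) : Prop :=
  ∀ v ∈ X, ∀ ℓ : Vn n →ₗ[ℝ] ℝ, Z (fun x => v x + ℓ x) = Z v

/-- `Z` is homogeneous of degree `α`: `Z(λ v) = λ^α Z(v)` for `λ > 0`. -/
def HomogeneousR {n : ℕ} (X : Set (Vn n → ℝ)) (Z : (Vn n → ℝ) → ℝ) (α : ℝ) : Prop :=
  ∀ v ∈ X, ∀ l : ℝ, 0 < l → Z (fun x => l * v x) = l ^ α * Z v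

/-!
Call `w` an additive point of `Z` if `Z (u + w) = Z u + Z w` for every convex `u`. Dual
epi-translation invariance and `Z 0 = 0` make affine functions additive points, and additive
points stay additive after adding an affine function. If `ψ` is an additive point, the valuation
property applied to `u + m • (ψ ⊔ 0)` and `u + m • ψ + ψ ⊔ 0` shows that
`m ↦ Z (u + m • (ψ ⊔ 0))` is affine on `ℕ`; rescaling by homogeneity and letting `m⁻¹ • u → 0`
by continuity shows that `ψ ⊔ 0` is an additive point, hence so is `w ⊔ a = (w - a) ⊔ 0 + a`
for affine `a`. A finite convex function is the increasing limit of running maxima of countably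
many affine minorants, locally uniformly by Dini's theorem, so by continuity every convex function
is an additive point, and homogeneity finishes the proof.
-/

namespace ConvFin

variable {n : ℕ} {u v : Vn n → ℝ}

lemma continuous (hv : v ∈ ConvFin n) : Continuous v :=
  (ConvexOn.locallyLipschitz hv).continuous

lemma add_mem (hu : u ∈ ConvFin n) (hv : v ∈ ConvFin n) : u + v ∈ ConvFin n :=
  ConvexOn.add hu hv

lemma smul_mem {c : ℝ} (hc : 0 ≤ c) (hv : v ∈ ConvFin n) : c • v ∈ ConvFin n :=
  ConvexOn.smul hc hv

lemma sup_mem (hu : u ∈ ConvFin n) (hv : v ∈ ConvFin n) : u ⊔ v ∈ ConvFin n :=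
  ConvexOn.sup hu hv

lemma zero_mem : (0 : Vn n → ℝ) ∈ ConvFin n :=
  convexOn_const 0 convex_univ

lemma affineMap_mem (a : Vn n →ᵃ[ℝ] ℝ) : ⇑a ∈ ConvFin n := by
  rw [AffineMap.decomp a]
  exact (a.linear.convexOn convex_univ).add (convexOn_const _ convex_univ)

end ConvFin

lemma tendsto_partialSups_apply {α : Type*} {A : ℕ → α → ℝ} {v : α → ℝ} (hle : ∀ i, A i ≤ v)
    (hsup : ⨆ i, A i = v) (x : α) : Tendsto (fun N => partialSups A N x) atTop (𝓝 (v x)) := by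
  simp_rw [Pi.partialSups_apply]
  have hbdd : BddAbove (Set.range fun i => A i x) := ⟨v x, by rintro _ ⟨i, rfl⟩; exact hle i x⟩
  have h := tendsto_atTop_ciSup (partialSups (A · x)).monotone (bddAbove_range_partialSups.2 hbdd)
  rwa [ciSup_partialSups_eq hbdd, ← iSup_apply, hsup] at h

lemma add_smul_posPart_sup {α : Type*} (u ψ : α → ℝ) {s : ℝ} (hs : 0 ≤ s) :
    (u + s • (ψ ⊔ 0)) ⊔ (u + s • ψ + ψ ⊔ 0) = u + (s + 1) • (ψ ⊔ 0) := by
  funext x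
  simp only [Pi.sup_apply, Pi.add_apply, Pi.smul_apply, Pi.zero_apply, smul_eq_mul]
  rcases le_total (ψ x) 0 with h | h
  · rw [max_eq_right h, max_eq_left (by nlinarith)]
    ring
  · rw [max_eq_left h, max_eq_right (by nlinarith)]
    ring

lemma add_smul_posPart_inf {α : Type*} (u ψ : α → ℝ) {s : ℝ} (hs : 0 ≤ s) :
    (u + s • (ψ ⊔ 0)) ⊓ (u + s • ψ + ψ ⊔ 0) = u + s • ψ := by
  funext x
  simp only [Pi.inf_apply, Pi.sup_apply, Pi.add_apply, Pi.smul_apply, Pi.zero_apply, smul_eq_mul]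
  rcases le_total (ψ x) 0 with h | h
  · rw [max_eq_right h, min_eq_right (by nlinarith)]
    ring
  · rw [max_eq_left h, min_eq_left (by nlinarith)]

section Functionals

variable {n : ℕ} {X : Set (Vn n → ℝ)} {Z : (Vn n → ℝ) → ℝ} {u v w ψ : Vn n → ℝ}

lemma epiConvergesR_of_tendsto_comp {vk : ℕ → Vn n → ℝ}
    (h : ∀ x (xk : ℕ → Vn n), Tendsto xk atTop (𝓝 x) →
      Tendsto (fun k => vk k (xk k)) atTop (𝓝 (v x))) :
    EpiConvergesR vk v := fun x =>
  ⟨fun xk hxk => (EReal.tendsto_coe.2 (h x xk hxk)).liminf_eq.ge,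
    fun _ => x, tendsto_const_nhds, h x _ tendsto_const_nhds⟩

lemma HomogeneousR.map_zero (hhom : HomogeneousR X Z 1) (h0 : 0 ∈ X) : Z 0 = 0 := by
  have h : Z ((2 : ℝ) • 0) = 2 ^ (1 : ℝ) * Z 0 := hhom 0 h0 2 two_pos
  rw [smul_zero, Real.rpow_one] at h
  linarith

lemma HomogeneousR.map_smul_of_nonneg (hhom : HomogeneousR X Z 1) (h0 : 0 ∈ X) (hv : v ∈ X)
    {c : ℝ} (hc : 0 ≤ c) : Z (c • v) = c * Z v := by
  rcases hc.eq_or_lt with rfl | hc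
  · rw [zero_smul, zero_mul, hhom.map_zero h0]
  · have h : Z (c • v) = c ^ (1 : ℝ) * Z v := hhom v hv c hc
    rwa [Real.rpow_one] at h

lemma DuallyEpiTranslationInvariant.map_add_affineMap (hinv : DuallyEpiTranslationInvariant X Z)
    (hv : v ∈ X) (a : Vn n →ᵃ[ℝ] ℝ) : Z (v + a) = Z v := by
  rw [AffineMap.decomp a, ← add_assoc]
  exact hinv v hv a.linear (a 0)

def IsAdditiveAt (Z : (Vn n → ℝ) → ℝ) (w : Vn n → ℝ) : Prop :=
  w ∈ ConvFin n ∧ ∀ u ∈ ConvFin n, Z (u + w) = Z u + Z w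

lemma isAdditiveAt_affineMap (hinv : DuallyEpiTranslationInvariant (ConvFin n) Z)
    (hhom : HomogeneousR (ConvFin n) Z 1) (a : Vn n →ᵃ[ℝ] ℝ) : IsAdditiveAt Z a := by
  have hZa : Z a = 0 := by
    simpa only [zero_add, hhom.map_zero ConvFin.zero_mem] using
      hinv.map_add_affineMap ConvFin.zero_mem a
  exact ⟨ConvFin.affineMap_mem a, fun u hu => by rw [hinv.map_add_affineMap hu, hZa, add_zero]⟩

lemma IsAdditiveAt.add_affineMap (hinv : DuallyEpiTranslationInvariant (ConvFin n) Z)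
    (hw : IsAdditiveAt Z w) (a : Vn n →ᵃ[ℝ] ℝ) : IsAdditiveAt Z (w + a) :=
  ⟨ConvFin.add_mem hw.1 (ConvFin.affineMap_mem a), fun u hu => by
    rw [← add_assoc, hinv.map_add_affineMap (ConvFin.add_mem hu hw.1), hinv.map_add_affineMap hw.1,
      hw.2 u hu]⟩

lemma IsAdditiveAt.map_add_natCast_smul (hw : IsAdditiveAt Z w) (hu : u ∈ ConvFin n) (m : ℕ) :
    Z (u + (m : ℝ) • w) = Z u + m * Z w := by
  induction m with
  | zero => simp
  | succ m ih =>
    have hmem : u + (m : ℝ) • w ∈ ConvFin n :=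
      ConvFin.add_mem hu (ConvFin.smul_mem m.cast_nonneg hw.1)
    rw [Nat.cast_succ, add_smul, one_smul, ← add_assoc, hw.2 _ hmem, ih]
    ring

lemma IsAdditiveAt.map_add_natCast_smul_sup_zero (hval : IsValuationR (ConvFin n) Z)
    (hψ : IsAdditiveAt Z ψ) (hu : u ∈ ConvFin n) (m : ℕ) :
    Z (u + (m : ℝ) • (ψ ⊔ 0)) = Z u + m * (Z (u + ψ ⊔ 0) - Z u) := by
  have hP : ψ ⊔ 0 ∈ ConvFin n := ConvFin.sup_mem hψ.1 ConvFin.zero_mem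
  induction m with
  | zero => simp
  | succ m ih =>
    have hm : (0 : ℝ) ≤ m := m.cast_nonneg
    have h := hval (u + (m : ℝ) • (ψ ⊔ 0)) (u + (m : ℝ) • ψ + ψ ⊔ 0)
      (ConvFin.add_mem hu (ConvFin.smul_mem hm hP))
      (ConvFin.add_mem (ConvFin.add_mem hu (ConvFin.smul_mem hm hψ.1)) hP)
      (by rw [add_smul_posPart_sup u ψ hm]
          exact ConvFin.add_mem hu (ConvFin.smul_mem (by positivity) hP))
      (by rw [add_smul_posPart_inf u ψ hm]; exact ConvFin.add_mem hu (ConvFin.smul_mem hm hψ.1))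
    rw [add_smul_posPart_sup u ψ hm, add_smul_posPart_inf u ψ hm, hψ.map_add_natCast_smul hu,
      add_right_comm, hψ.map_add_natCast_smul (ConvFin.add_mem hu hP), ih] at h
    push_cast
    linarith

lemma IsAdditiveAt.sup_zero (hcont : ContinuousValR (ConvFin n) Z)
    (hval : IsValuationR (ConvFin n) Z) (hhom : HomogeneousR (ConvFin n) Z 1)
    (hψ : IsAdditiveAt Z ψ) : IsAdditiveAt Z (ψ ⊔ 0) := by
  have hP : ψ ⊔ 0 ∈ ConvFin n := ConvFin.sup_mem hψ.1 ConvFin.zero_mem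
  refine ⟨hP, fun u hu => ?_⟩
  have hscaled (k : ℕ) : Z (((k : ℝ) + 1)⁻¹ • u + ψ ⊔ 0) =
      ((k : ℝ) + 1)⁻¹ * Z u + (Z (u + ψ ⊔ 0) - Z u) := by
    have hk : (0 : ℝ) < k + 1 := by positivity
    have h := hhom.map_smul_of_nonneg ConvFin.zero_mem
      (ConvFin.add_mem (ConvFin.smul_mem (inv_nonneg.2 hk.le) hu) hP) hk.le
    rw [smul_add, smul_inv_smul₀ hk.ne', ← Nat.cast_succ,
      hψ.map_add_natCast_smul_sup_zero hval hu, Nat.cast_succ] at h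
    apply mul_left_cancel₀ hk.ne'
    rw [← h]
    field_simp
  have hlim : Tendsto (fun k : ℕ => ((k : ℝ) + 1)⁻¹) atTop (𝓝 0) := by
    simpa only [one_div] using tendsto_one_div_add_atTop_nhds_zero_nat (𝕜 := ℝ)
  have hZlim : Tendsto (fun k : ℕ => Z (((k : ℝ) + 1)⁻¹ • u + ψ ⊔ 0)) atTop (𝓝 (Z (ψ ⊔ 0))) := by
    refine hcont _ _ (fun k => ConvFin.add_mem (ConvFin.smul_mem (by positivity) hu) hP) hP
      (epiConvergesR_of_tendsto_comp fun x xk hxk => ?_)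
    simpa using (hlim.mul ((ConvFin.continuous hu).tendsto x |>.comp hxk)).add
      ((ConvFin.continuous hP).tendsto x |>.comp hxk)
  have hZP : Z (ψ ⊔ 0) = Z (u + ψ ⊔ 0) - Z u := by
    refine tendsto_nhds_unique hZlim ?_
    simpa [hscaled] using (hlim.mul_const (Z u)).add_const (Z (u + ψ ⊔ 0) - Z u)
  linarith

lemma IsAdditiveAt.sup_affineMap (hcont : ContinuousValR (ConvFin n) Z)
    (hval : IsValuationR (ConvFin n) Z) (hinv : DuallyEpiTranslationInvariant (ConvFin n) Z)
    (hhom : HomogeneousR (ConvFin n) Z 1) (hw : IsAdditiveAt Z w) (a : Vn n →ᵃ[ℝ] ℝ) :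
    IsAdditiveAt Z (w ⊔ a) := by
  have h := ((hw.add_affineMap hinv (-a)).sup_zero hcont hval hhom).add_affineMap hinv a
  rwa [AffineMap.coe_neg, ← sub_eq_add_neg, sup_add, sub_add_cancel, zero_add] at h

lemma IsAdditiveAt.of_tendstoLocallyUniformly (hcont : ContinuousValR (ConvFin n) Z)
    {W : ℕ → Vn n → ℝ} (hW : ∀ N, IsAdditiveAt Z (W N)) (hv : v ∈ ConvFin n)
    (hWv : TendstoLocallyUniformly W v atTop) : IsAdditiveAt Z v := by
  have hlim (u : Vn n → ℝ) (hu : u ∈ ConvFin n) :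
      Tendsto (fun N => Z (u + W N)) atTop (𝓝 (Z (u + v))) :=
    hcont _ _ (fun N => ConvFin.add_mem hu (hW N).1) (ConvFin.add_mem hu hv)
      (epiConvergesR_of_tendsto_comp fun x xk hxk =>
        ((ConvFin.continuous hu).tendsto x |>.comp hxk).add
          (hWv.tendsto_comp (ConvFin.continuous hv).continuousAt hxk))
  have hZW : Tendsto (fun N => Z (W N)) atTop (𝓝 (Z v)) := by
    simpa only [zero_add] using hlim 0 ConvFin.zero_mem
  exact ⟨hv, fun u hu =>
    tendsto_nhds_unique (hlim u hu) ((hZW.const_add (Z u)).congr fun N => ((hW N).2 u hu).symm)⟩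

lemma isAdditiveAt_of_mem (hcont : ContinuousValR (ConvFin n) Z)
    (hval : IsValuationR (ConvFin n) Z) (hinv : DuallyEpiTranslationInvariant (ConvFin n) Z)
    (hhom : HomogeneousR (ConvFin n) Z 1) (hv : v ∈ ConvFin n) : IsAdditiveAt Z v := by
  obtain ⟨l, c, hle, hsup⟩ :=
    ConvexOn.real_univ_sSup_of_nat_affine_eq (ConvFin.continuous hv).lowerSemicontinuous hv
  let a (i : ℕ) : Vn n →ᵃ[ℝ] ℝ := (l i).toLinearMap.toAffineMap + AffineMap.const ℝ (Vn n) (c i)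
  let W := partialSups fun i => ⇑(a i)
  have hW (N : ℕ) : IsAdditiveAt Z (W N) := by
    induction N with
    | zero => exact isAdditiveAt_affineMap hinv hhom (a 0)
    | succ N ih =>
      rw [show W (N + 1) = W N ⊔ a (N + 1) from partialSups_succ _ N]
      exact ih.sup_affineMap hcont hval hinv hhom (a (N + 1))
  exact IsAdditiveAt.of_tendstoLocallyUniformly hcont hW hv <|
    Monotone.tendstoLocallyUniformly_of_forall_tendsto (fun N => ConvFin.continuous (hW N).1)
      (partialSups _).monotone (ConvFin.continuous hv) (tendsto_partialSups_apply hle hsup)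

end Functionals

/-- **Additivity of `1`-homogeneous valuations** (Corollary 6.4): a
continuous and dually epi-translation invariant valuation on `Conv(ℝⁿ;ℝ)`
that is homogeneous of degree `1` is additive:
`Z(α v + β w) = α Z(v) + β Z(w)` for `α, β ≥ 0`. -/
theorem additivity_finite (n : ℕ) (Z : (Vn n → ℝ) → ℝ)
    (hcont : ContinuousValR (ConvFin n) Z)
    (hval : IsValuationR (ConvFin n) Z)
    (hinv : DuallyEpiTranslationInvariant (ConvFin n) Z)
    (hhom : HomogeneousR (ConvFin n) Z 1) :
    ∀ α β : ℝ, 0 ≤ α → 0 ≤ β → ∀ v w : Vn n → ℝ,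
      v ∈ ConvFin n → w ∈ ConvFin n →
        Z (fun x => α * v x + β * w x) = α * Z v + β * Z w := by
  intro α β hα hβ v w hv hw
  calc Z (fun x => α * v x + β * w x) = Z (α • v + β • w) := rfl
    _ = Z (α • v) + Z (β • w) :=
      (isAdditiveAt_of_mem hcont hval hinv hhom (ConvFin.smul_mem hβ hw)).2 _
        (ConvFin.smul_mem hα hv)
    _ = α * Z v + β * Z w := by
      rw [hhom.map_smul_of_nonneg ConvFin.zero_mem hv hα,
        hhom.map_smul_of_nonneg ConvFin.zero_mem hw hβ]
end
end

section
/- A functional Z : Conv_sc(ℝⁿ) → ℝ is a continuous and epi-translation invariant valuation that is epi-homogeneous of degree 0, if and only if Z is constant. -/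
open Filter Topology MeasureTheory

noncomputable section

/-!
For `λ → 0⁺` the epi-multiples `λ ⊡ u` of a super-coercive `u` epi-converge to the indicator
function `I_{0}` of the origin: away from `0`, super-coercivity makes `λ u(x/λ)` blow up, while at
`0` a real lower bound `m ≤ u` gives `λ ⊡ u ≥ λ m → 0`, with equality in the limit along `λ x₀`
for any `x₀` where `u` is finite. A continuous valuation that is epi-homogeneous of degree `0` is
constant along `λ ↦ λ ⊡ u`, hence `Z u = Z I_{0}` for every `u`. Conversely, a constant functional
has all four properties because `Conv_sc(ℝⁿ)` is stable under epi-translations and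
epi-multiplications.
-/

namespace EReal

lemma coe_mul_ne_bot {l : ℝ} (hl : 0 ≤ l) {a : EReal} (ha : a ≠ ⊥) : (l : EReal) * a ≠ ⊥ :=
  (mul_ne_bot _ _).2
    ⟨.inl (coe_ne_bot l), .inr ha, .inl (coe_ne_top l), .inl (EReal.coe_nonneg.2 hl)⟩

lemma coe_mul_ne_top {l : ℝ} (hl : 0 ≤ l) {a : EReal} (ha : a ≠ ⊤) : (l : EReal) * a ≠ ⊤ :=
  (mul_ne_top _ _).2
    ⟨.inl (coe_ne_bot l), .inl (EReal.coe_nonneg.2 hl), .inl (coe_ne_top l), .inr ha⟩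

lemma continuous_coe_mul (l : ℝ) : Continuous fun a : EReal => (l : EReal) * a :=
  continuous_iff_continuousAt.2 fun _ =>
    Tendsto.const_mul tendsto_id (.inl (coe_ne_bot l)) (.inl (coe_ne_top l))

end EReal

section Semicontinuity

variable {α : Type*} [TopologicalSpace α]

lemma LowerSemicontinuous.coe_mul {f : α → EReal} (hf : LowerSemicontinuous f) {l : ℝ}
    (hl : 0 ≤ l) : LowerSemicontinuous fun x => (l : EReal) * f x :=
  (EReal.continuous_coe_mul l).comp_lowerSemicontinuous hf
    fun _ _ h => mul_le_mul_of_nonneg_left h (EReal.coe_nonneg.2 hl)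

lemma LowerSemicontinuous.add_coe {f : α → EReal} (hf : LowerSemicontinuous f) (c : ℝ) :
    LowerSemicontinuous fun x => f x + (c : EReal) :=
  hf.add' lowerSemicontinuous_const fun _ =>
    EReal.continuousAt_add (.inr (EReal.coe_ne_bot c)) (.inr (EReal.coe_ne_top c))

lemma LowerSemicontinuous.exists_coe_le {E : Type*} [NormedAddCommGroup E] [ProperSpace E]
    {f : E → EReal} (hf : LowerSemicontinuous f) (hbot : ∀ x, f x ≠ ⊥) {R : ℝ}
    (hR : ∀ x, R ≤ ‖x‖ → 0 ≤ f x) : ∃ m : ℝ, ∀ x, (m : EReal) ≤ f x := by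
  obtain ⟨a, -, ha⟩ := (hf.lowerSemicontinuousOn _).exists_isMinOn
    (Metric.nonempty_closedBall.2 (abs_nonneg R)) (isCompact_closedBall (0 : E) |R|)
  obtain ⟨r, -, hr⟩ := EReal.exists_between_coe_real (bot_lt_iff_ne_bot.2 (hbot a))
  refine ⟨min r 0, fun x => ?_⟩
  rcases le_or_gt ‖x‖ |R| with hx | hx
  · calc ((min r 0 : ℝ) : EReal) ≤ r := EReal.coe_le_coe_iff.2 (min_le_left r 0)
      _ ≤ f a := hr.le
      _ ≤ f x := ha (mem_closedBall_zero_iff.2 hx)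
  · calc ((min r 0 : ℝ) : EReal) ≤ 0 := EReal.coe_nonpos.2 (min_le_right r 0)
      _ ≤ f x := hR x ((le_abs_self R).trans hx.le)

end Semicontinuity

section ConvSc

variable {n : ℕ}

open Classical in
def zeroIndicator (n : ℕ) : Vn n → EReal := fun x => if x = 0 then 0 else ⊤

lemma zeroIndicator_zero : zeroIndicator n 0 = 0 := if_pos rfl

lemma zeroIndicator_of_ne_zero {x : Vn n} (hx : x ≠ 0) : zeroIndicator n x = ⊤ := if_neg hx

lemma zeroIndicator_nonneg (x : Vn n) : 0 ≤ zeroIndicator n x := by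
  by_cases hx : x = 0
  · rw [hx, zeroIndicator_zero]
  · rw [zeroIndicator_of_ne_zero hx]; exact le_top

lemma zeroIndicator_mem_convSc : zeroIndicator n ∈ ConvSc n := by
  refine ⟨⟨?_, ?_, fun x => (zeroIndicator_nonneg x).trans_lt' EReal.bot_lt_zero |>.ne',
    ⟨0, by simp [zeroIndicator_zero]⟩⟩, fun M => ⟨1, fun x hx => ?_⟩⟩
  · intro x y t ht ht1
    have hcoef : ∀ s : ℝ, 0 < s → ∀ z, 0 ≤ (s : EReal) * zeroIndicator n z := fun s hs z =>
      mul_nonneg (EReal.coe_nonneg.2 hs.le) (zeroIndicator_nonneg z)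
    by_cases hx : x = 0
    · by_cases hy : y = 0
      · simp [hx, hy, zeroIndicator_zero]
      · rw [zeroIndicator_of_ne_zero hy, EReal.mul_top_of_pos (EReal.coe_pos.2 (sub_pos.2 ht1))]
        exact le_top.trans (le_add_of_nonneg_left (hcoef t ht x))
    · rw [zeroIndicator_of_ne_zero hx, EReal.mul_top_of_pos (EReal.coe_pos.2 ht)]
      exact le_top.trans (le_add_of_nonneg_right (hcoef (1 - t) (sub_pos.2 ht1) y))
  · intro x y hy
    by_cases hx : x = 0
    · rw [hx, zeroIndicator_zero] at hy
      exact .of_forall fun z => hy.trans_le (zeroIndicator_nonneg z)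
    · rw [zeroIndicator_of_ne_zero hx] at hy
      filter_upwards [isOpen_ne.mem_nhds hx] with z hz
      rwa [zeroIndicator_of_ne_zero hz]
  · rw [zeroIndicator_of_ne_zero (norm_pos_iff.1 (one_pos.trans_le hx))]
    exact le_top

lemma epiMul_of_ne_zero {l : ℝ} (hl : l ≠ 0) (u : Vn n → EReal) :
    epiMul l u = fun x => (l : EReal) * u (l⁻¹ • x) :=
  if_neg hl

lemma coe_mul_le_epiMul {u : Vn n → EReal} {m : ℝ} (hm : ∀ y, (m : EReal) ≤ u y) {l : ℝ}
    (hl : 0 < l) (x : Vn n) : ((l * m : ℝ) : EReal) ≤ epiMul l u x := by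
  rw [epiMul_of_ne_zero hl.ne', EReal.coe_mul]
  exact mul_le_mul_of_nonneg_left (hm _) (EReal.coe_nonneg.2 hl.le)

lemma epiMul_smul {l : ℝ} (hl : l ≠ 0) (u : Vn n → EReal) (x : Vn n) :
    epiMul l u (l • x) = (l : EReal) * u x := by
  simp only [epiMul_of_ne_zero hl, inv_smul_smul₀ hl]

lemma coe_mul_norm_le_epiMul {u : Vn n → EReal} {M R : ℝ}
    (hR : ∀ y : Vn n, R ≤ ‖y‖ → ((M * ‖y‖ : ℝ) : EReal) ≤ u y) {l : ℝ} (hl : 0 < l) {x : Vn n}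
    (hx : R ≤ ‖l⁻¹ • x‖) : ((M * ‖x‖ : ℝ) : EReal) ≤ epiMul l u x := by
  have hscale : M * ‖x‖ = l * (M * ‖l⁻¹ • x‖) := by
    rw [norm_smul_of_nonneg (inv_nonneg.2 hl.le)]
    field_simp
  rw [epiMul_of_ne_zero hl.ne', hscale, EReal.coe_mul]
  exact mul_le_mul_of_nonneg_left (hR _ hx) (EReal.coe_nonneg.2 hl.le)

lemma epiMul_mem_convSc {u : Vn n → EReal} (hu : u ∈ ConvSc n) {l : ℝ} (hl : 0 < l) :
    epiMul l u ∈ ConvSc n := by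
  obtain ⟨⟨hconv, hlsc, hbot, xb, hxb⟩, hsc⟩ := hu
  have hl' : (0 : EReal) ≤ l := EReal.coe_nonneg.2 hl.le
  refine ⟨⟨?_, ?_, ?_, l • xb, ?_⟩, fun M => ?_⟩
  · intro x y t ht ht1
    rw [epiMul_of_ne_zero hl.ne']
    calc (l : EReal) * u (l⁻¹ • (t • x + (1 - t) • y))
        = (l : EReal) * u (t • (l⁻¹ • x) + (1 - t) • (l⁻¹ • y)) := by
          rw [smul_add, smul_comm l⁻¹ t x, smul_comm l⁻¹ (1 - t) y]
      _ ≤ (l : EReal) * ((t : EReal) * u (l⁻¹ • x) + ((1 - t : ℝ) : EReal) * u (l⁻¹ • y)) :=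
          mul_le_mul_of_nonneg_left (hconv _ _ t ht ht1) hl'
      _ = (t : EReal) * ((l : EReal) * u (l⁻¹ • x))
          + ((1 - t : ℝ) : EReal) * ((l : EReal) * u (l⁻¹ • y)) := by
          rw [EReal.left_distrib_of_nonneg_of_ne_top hl' (EReal.coe_ne_top l),
            mul_left_comm, mul_left_comm (l : EReal)]
  · rw [epiMul_of_ne_zero hl.ne']
    exact (hlsc.comp (continuous_const_smul l⁻¹)).coe_mul hl.le
  · rw [epiMul_of_ne_zero hl.ne']
    exact fun x => EReal.coe_mul_ne_bot hl.le (hbot _)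
  · rw [epiMul_smul hl.ne']
    exact EReal.coe_mul_ne_top hl.le hxb
  · obtain ⟨R, hR⟩ := hsc M
    refine ⟨l * max R 0, fun x hx => coe_mul_norm_le_epiMul hR hl ?_⟩
    rw [norm_smul_of_nonneg (inv_nonneg.2 hl.le)]
    calc R ≤ max R 0 := le_max_left R 0
      _ = l⁻¹ * (l * max R 0) := by field_simp
      _ ≤ l⁻¹ * ‖x‖ := mul_le_mul_of_nonneg_left hx (inv_nonneg.2 hl.le)

lemma translate_mem_convSc {u : Vn n → EReal} (hu : u ∈ ConvSc n) (x₀ : Vn n) (c : ℝ) :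
    (fun x => u (x - x₀) + (c : EReal)) ∈ ConvSc n := by
  obtain ⟨⟨hconv, hlsc, hbot, xb, hxb⟩, hsc⟩ := hu
  refine ⟨⟨?_, ?_, ?_, xb + x₀, ?_⟩, fun M => ?_⟩
  · intro x y t ht ht1
    have hc : (c : EReal) = ((t : ℝ) : EReal) * c + ((1 - t : ℝ) : EReal) * c := by
      norm_cast; ring
    calc u (t • x + (1 - t) • y - x₀) + (c : EReal)
        = u (t • (x - x₀) + (1 - t) • (y - x₀)) + (c : EReal) := by
          congr 2; module
      _ ≤ ((t : EReal) * u (x - x₀) + ((1 - t : ℝ) : EReal) * u (y - x₀)) + (c : EReal) :=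
          add_le_add_left (hconv _ _ t ht ht1) _
      _ = (t : EReal) * (u (x - x₀) + (c : EReal))
          + ((1 - t : ℝ) : EReal) * (u (y - x₀) + (c : EReal)) := by
          rw [EReal.left_distrib_of_nonneg_of_ne_top (EReal.coe_nonneg.2 ht.le)
              (EReal.coe_ne_top t),
            EReal.left_distrib_of_nonneg_of_ne_top (EReal.coe_nonneg.2 (sub_pos.2 ht1).le)
              (EReal.coe_ne_top _), add_add_add_comm, ← hc]
  · exact (hlsc.comp (continuous_sub_right x₀)).add_coe c
  · exact fun x => by simp [EReal.add_eq_bot_iff, hbot]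
  · simpa only [add_sub_cancel_right] using (EReal.add_lt_top hxb (EReal.coe_ne_top c)).ne
  · obtain ⟨R, hR⟩ := hsc (|M| + 1)
    refine ⟨max (R + ‖x₀‖) ((|M| + 1) * ‖x₀‖ - c), fun x hx => ?_⟩
    have hd : ‖x‖ - ‖x₀‖ ≤ ‖x - x₀‖ := norm_sub_norm_le x x₀
    have hreal : M * ‖x‖ ≤ (|M| + 1) * ‖x - x₀‖ + c := by
      nlinarith [le_abs_self M, abs_nonneg M, norm_nonneg x, le_max_right (R + ‖x₀‖)
        ((|M| + 1) * ‖x₀‖ - c)]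
    calc ((M * ‖x‖ : ℝ) : EReal) ≤ (((|M| + 1) * ‖x - x₀‖ : ℝ) : EReal) + (c : EReal) := by
          exact_mod_cast hreal
      _ ≤ u (x - x₀) + (c : EReal) :=
          add_le_add_left (hR _ (by linarith [le_max_left (R + ‖x₀‖) ((|M| + 1) * ‖x₀‖ - c)])) _

variable {l : ℕ → ℝ}

lemma tendsto_epiMul_top {u : Vn n → EReal}
    (hsc : ∀ M : ℝ, ∃ R : ℝ, ∀ x : Vn n, R ≤ ‖x‖ → ((M * ‖x‖ : ℝ) : EReal) ≤ u x)
    (hl : ∀ k, 0 < l k) (hl0 : Tendsto l atTop (𝓝 0)) {x : Vn n} (hx : x ≠ 0) {xk : ℕ → Vn n}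
    (hxk : Tendsto xk atTop (𝓝 x)) :
    Tendsto (fun k => epiMul (l k) u (xk k)) atTop (𝓝 ⊤) := by
  have hxpos : 0 < ‖x‖ := norm_pos_iff.2 hx
  have hinv : Tendsto (fun k => (l k)⁻¹) atTop atTop :=
    tendsto_inv_nhdsGT_zero.comp (tendsto_nhdsWithin_iff.2 ⟨hl0, .of_forall hl⟩)
  have hscaled : Tendsto (fun k => ‖(l k)⁻¹ • xk k‖) atTop atTop := by
    refine (hxk.norm.pos_mul_atTop hxpos hinv).congr fun k => ?_
    rw [norm_smul_of_nonneg (inv_nonneg.2 (hl k).le), mul_comm]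
  rw [EReal.tendsto_nhds_top_iff_real]
  intro r
  set M := (|r| + 1) / ‖x‖
  obtain ⟨R, hR⟩ := hsc M
  have hMx : r < M * ‖x‖ := by
    rw [div_mul_cancel₀ _ hxpos.ne']
    linarith [le_abs_self r]
  filter_upwards [(hxk.norm.const_mul M).eventually_const_lt hMx,
    hscaled.eventually_ge_atTop R] with k hk hkR
  exact (EReal.coe_lt_coe_iff.2 hk).trans_le (coe_mul_norm_le_epiMul hR (hl k) hkR)

theorem epiConverges_epiMul_zeroIndicator {u : Vn n → EReal} (hu : u ∈ ConvSc n)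
    (hl : ∀ k, 0 < l k) (hl0 : Tendsto l atTop (𝓝 0)) :
    EpiConverges (fun k => epiMul (l k) u) (zeroIndicator n) := by
  obtain ⟨⟨-, hlsc, hbot, xb, hxb⟩, hsc⟩ := hu
  intro x
  by_cases hx : x = 0
  · subst hx
    rw [zeroIndicator_zero]
    obtain ⟨R, hR⟩ := hsc 0
    obtain ⟨m, hm⟩ := hlsc.exists_coe_le hbot (R := R) fun y hy => by simpa using hR y hy
    have hlim : ∀ a : ℝ, Tendsto (fun k => ((l k * a : ℝ) : EReal)) atTop (𝓝 0) := fun a => by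
      simpa using EReal.tendsto_coe.2 (hl0.mul_const a)
    refine ⟨fun xk _ => ?_, fun k => l k • xb, by simpa using hl0.smul_const xb, ?_⟩
    · rw [← (hlim m).liminf_eq]
      exact liminf_le_liminf (.of_forall fun k => coe_mul_le_epiMul hm (hl k) (xk k))
    · obtain ⟨a, ha⟩ : ∃ a : ℝ, u xb = a := ⟨_, (EReal.coe_toReal hxb (hbot xb)).symm⟩
      simp_rw [epiMul_smul (hl _).ne', ha, ← EReal.coe_mul]
      exact hlim _
  · rw [zeroIndicator_of_ne_zero hx]
    refine ⟨fun xk hxk => ?_, fun _ => x, tendsto_const_nhds,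
      tendsto_epiMul_top hsc hl hl0 hx tendsto_const_nhds⟩
    rw [(tendsto_epiMul_top hsc hl hl0 hx hxk).liminf_eq]

lemma eq_zeroIndicator_of_epiHomogeneous_zero {Z : (Vn n → EReal) → ℝ}
    (hcont : ContinuousVal (ConvSc n) Z) (hhom : EpiHomogeneous (ConvSc n) Z 0)
    {u : Vn n → EReal} (hu : u ∈ ConvSc n) : Z u = Z (zeroIndicator n) := by
  have hl : ∀ k : ℕ, (0 : ℝ) < 1 / ((k : ℝ) + 1) := fun k => by positivity
  have hlim := hcont _ _ (fun k => epiMul_mem_convSc hu (hl k)) zeroIndicator_mem_convSc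
    (epiConverges_epiMul_zeroIndicator hu hl tendsto_one_div_add_atTop_nhds_zero_nat)
  simp_rw [hhom u hu _ (hl _), Real.rpow_zero, one_mul] at hlim
  exact tendsto_nhds_unique tendsto_const_nhds hlim

end ConvSc

/-- **Classification of `0`-epi-homogeneous valuations** (Theorem 7.1):
`Z : Conv_sc(ℝⁿ) → ℝ` is a continuous and epi-translation invariant valuation
that is epi-homogeneous of degree `0` if and only if `Z` is constant. -/
theorem classification_zero_epihomogeneous (n : ℕ) (Z : (Vn n → EReal) → ℝ) :
    (ContinuousVal (ConvSc n) Z ∧ IsValuation (ConvSc n) Z ∧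
      EpiTranslationInvariant (ConvSc n) Z ∧
      EpiHomogeneous (ConvSc n) Z 0) ↔
    (∃ c : ℝ, ∀ u ∈ ConvSc n, Z u = c) := by
  constructor
  · rintro ⟨hcont, -, -, hhom⟩
    exact ⟨Z (zeroIndicator n), fun u hu => eq_zeroIndicator_of_epiHomogeneous_zero hcont hhom hu⟩
  · rintro ⟨c, hc⟩
    refine ⟨fun uk u huk hu _ => ?_, fun u v hu hv hsup hinf => ?_, fun u hu x₀ c' => ?_,
      fun u hu l hl => ?_⟩
    · simp_rw [hc _ (huk _), hc u hu]
      exact tendsto_const_nhds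
    · rw [hc _ hu, hc _ hv, hc _ hsup, hc _ hinf]
    · rw [hc _ hu, hc _ (translate_mem_convSc hu x₀ c')]
    · rw [hc _ hu, hc _ (epiMul_mem_convSc hu hl), Real.rpow_zero, one_mul]
end
end

section
/- There exists a continuous and dually translation invariant valuation Z : Conv(ℝⁿ;ℝ) → ℝ that cannot be written as a finite sum of homogeneous valuations; that is, there is no m ∈ ℕ and no valuations Z₁,…,Z_m : Conv(ℝⁿ;ℝ) → ℝ, each homogeneous of some degree α_i ∈ ℝ, with Z = Z₁ + ⋯ + Z_m. -/
open Filter Topology MeasureTheory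

noncomputable section

/-!
Take `Z v = exp (v 0)`. Pointwise maxima and minima at `0` are a permutation of the values
at `0`, so `Z` is a valuation, and linear functions vanish at `0`. For finite convex functions
epi-convergence implies pointwise convergence: the lower bound is part of epi-convergence, and
the upper bound at `x` comes from recovery sequences at the `2n` points `x ± r eᵢ`, whose small
perturbations still contain `x` in their convex hull (by separation). A decomposition
`Z = ∑ Zᵢ` into homogeneous valuations would give `exp t = ∑ Zᵢ(1) t ^ αᵢ` on the constants
`t > 0`, which is incompatible with the exponential growth of `exp`.
-/

theorem OrthonormalBasis.abs_apply_le {ι E : Type*} [Fintype ι] [NormedAddCommGroup E]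
    [InnerProductSpace ℝ E] (b : OrthonormalBasis ι ℝ E) (f : E →ₗ[ℝ] ℝ) {M : ℝ}
    (hM : ∀ i, |f (b i)| ≤ M) (z : E) :
    |f z| ≤ Fintype.card ι * M * ‖z‖ := by
  conv_lhs => rw [← b.sum_repr' z]
  calc |f (∑ i, inner ℝ (b i) z • b i)| = |∑ i, inner ℝ (b i) z * f (b i)| := by simp
    _ ≤ ∑ i, |inner ℝ (b i) z| * |f (b i)| := by
        simpa only [abs_mul] using
          Finset.abs_sum_le_sum_abs (fun i => inner ℝ (b i) z * f (b i)) Finset.univ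
    _ ≤ ∑ _i : ι, ‖z‖ * M := by
        gcongr with i
        · exact (abs_real_inner_le_norm _ _).trans (by rw [b.norm_eq_one, one_mul])
        · exact hM i
    _ = Fintype.card ι * M * ‖z‖ := by
        rw [Finset.sum_const, Finset.card_univ, nsmul_eq_mul]; ring

theorem OrthonormalBasis.mem_convexHull_of_norm_sub_le {ι E : Type*} [Fintype ι] [Nonempty ι]
    [NormedAddCommGroup E] [InnerProductSpace ℝ E] (b : OrthonormalBasis ι ℝ E) {x : E}
    {ρ : ℝ} (y : ι × Bool → E)
    (hy : ∀ j, ‖y j - (x + (if j.2 then ρ else -ρ) • b j.1)‖ ≤ ρ / Fintype.card ι) :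
    x ∈ convexHull ℝ (Set.range y) := by
  by_contra hx
  obtain ⟨f, u, hfx, hfy⟩ := geometric_hahn_banach_point_closed (convex_convexHull ℝ _)
    ((Set.finite_range y).isClosed_convexHull ℝ) hx
  -- `f` drops by `ρ |f bᵢ|` from `x` to the vertex `x ± ρ bᵢ` chosen below, and for `|f bᵢ|`
  -- maximal the perturbation cannot make up for that drop, so `y (i, s)` is not separated.
  obtain ⟨i, -, hi⟩ := Finset.univ.exists_max_image (fun i => |f (b i)|) Finset.univ_nonempty
  set s := decide (f (b i) < 0)
  set d := y (i, s) - (x + (if s then ρ else -ρ) • b i)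
  have hvertex : (if s then ρ else -ρ) * f (b i) = -(ρ * |f (b i)|) := by
    by_cases h : f (b i) < 0
    · simp [s, h, abs_of_neg h]
    · simp [s, h, abs_of_nonneg (not_lt.1 h)]
  have hcard : (0 : ℝ) < Fintype.card ι := by exact_mod_cast Fintype.card_pos
  have hd : f d ≤ ρ * |f (b i)| := calc
    f d ≤ Fintype.card ι * |f (b i)| * ‖d‖ := (le_abs_self _).trans
        (b.abs_apply_le f.toLinearMap (fun i' => hi i' (Finset.mem_univ _)) d)
    _ ≤ Fintype.card ι * |f (b i)| * (ρ / Fintype.card ι) := by gcongr; exact hy (i, s)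
    _ = ρ * |f (b i)| := by field_simp
  have hyi : f (y (i, s)) = f x + (if s then ρ else -ρ) * f (b i) + f d := by
    simp only [d, map_sub, map_add, map_smul, smul_eq_mul]; ring
  linarith [hfy _ (subset_convexHull ℝ _ ⟨(i, s), rfl⟩)]

theorem EpiConvergesR.eventually_lt_apply {n : ℕ} {vk : ℕ → Vn n → ℝ} {v : Vn n → ℝ}
    (he : EpiConvergesR vk v) {x : Vn n} {c : ℝ} (hc : c < v x) :
    ∀ᶠ k in atTop, c < vk k x := by
  have hlim := (he x).1 (fun _ => x) tendsto_const_nhds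
  filter_upwards [eventually_lt_of_lt_liminf ((EReal.coe_lt_coe_iff.2 hc).trans_le hlim)]
    with k hk
  exact_mod_cast hk

theorem EpiConvergesR.eventually_apply_lt {n : ℕ} {vk : ℕ → Vn n → ℝ} {v : Vn n → ℝ}
    (he : EpiConvergesR vk v) (hconv : ∀ k, ConvexOn ℝ Set.univ (vk k)) {x : Vn n}
    (hv : ContinuousAt v x) {c : ℝ} (hc : v x < c) :
    ∀ᶠ k in atTop, vk k x < c := by
  rcases Nat.eq_zero_or_pos n with rfl | hn
  · obtain ⟨xk, -, hxk⟩ := (he x).2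
    simpa only [Subsingleton.elim _ x] using hxk.eventually (gt_mem_nhds hc)
  have : Nonempty (Fin n) := ⟨⟨0, hn⟩⟩
  obtain ⟨r, hr, hball⟩ := Metric.eventually_nhds_iff.1 (hv.eventually (gt_mem_nhds hc))
  set b := EuclideanSpace.basisFun (Fin n) ℝ
  set p : Fin n × Bool → Vn n := fun j => x + (if j.2 then r / 2 else -(r / 2)) • b j.1
  have hvp : ∀ j, v (p j) < c := fun j => hball <| by
    have : ‖(if j.2 then r / 2 else -(r / 2))‖ = r / 2 := by
      split_ifs <;> simp [abs_of_pos hr]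
    rw [dist_eq_norm, add_sub_cancel_left, norm_smul, b.norm_eq_one, this]
    linarith
  choose y hy hvy using fun j => (he (p j)).2
  have hδ : 0 < r / 2 / Fintype.card (Fin n) := by positivity
  have hnear : ∀ᶠ k in atTop, ∀ j, ‖y j k - p j‖ ≤ r / 2 / Fintype.card (Fin n) :=
    eventually_all.2 fun j => ((hy j).eventually (Metric.closedBall_mem_nhds _ hδ)).mono
      fun k hk => by rwa [dist_eq_norm] at hk
  have hval : ∀ᶠ k in atTop, ∀ j, vk k (y j k) < c :=
    eventually_all.2 fun j => (hvy j).eventually (gt_mem_nhds (hvp j))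
  filter_upwards [hnear, hval] with k hk hk'
  obtain ⟨_, ⟨j, rfl⟩, hxj⟩ := (hconv k).exists_ge_of_mem_convexHull (Set.subset_univ _)
    (b.mem_convexHull_of_norm_sub_le (fun j => y j k) hk)
  exact hxj.trans_lt (hk' j)

theorem EpiConvergesR.tendsto_apply {n : ℕ} {vk : ℕ → Vn n → ℝ} {v : Vn n → ℝ}
    (he : EpiConvergesR vk v) (hk : ∀ k, vk k ∈ ConvFin n) (hv : v ∈ ConvFin n) (x : Vn n) :
    Tendsto (fun k => vk k x) atTop (𝓝 (v x)) :=
  tendsto_order.2 ⟨fun _ hc => he.eventually_lt_apply hc, fun _ hc =>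
    he.eventually_apply_lt hk ((hv.continuousOn isOpen_univ).continuousAt Filter.univ_mem) hc⟩

theorem isValuationR_comp_eval {n : ℕ} (X : Set (Vn n → ℝ)) (g : ℝ → ℝ) (x : Vn n) :
    IsValuationR X (fun v => g (v x)) := by
  intro u v _ _ _ _
  simp only [Pi.sup_apply, Pi.inf_apply]
  rcases le_total (u x) (v x) with h | h
  · rw [sup_eq_right.2 h, inf_eq_left.2 h, add_comm]
  · rw [sup_eq_left.2 h, inf_eq_right.2 h]

theorem HomogeneousR.apply_const {n : ℕ} {Z : (Vn n → ℝ) → ℝ} {α : ℝ}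
    (hZ : HomogeneousR (ConvFin n) Z α) {t : ℝ} (ht : 0 < t) :
    Z (fun _ => t) = t ^ α * Z (fun _ => 1) := by
  simpa only [mul_one] using hZ (fun _ => 1) (convexOn_const 1 convex_univ) t ht

theorem sum_mul_rpow_le {ι : Type*} [Fintype ι] (c α : ι → ℝ) {t : ℝ} (ht : 1 ≤ t) :
    ∑ i, c i * t ^ α i ≤ (∑ i, |c i|) * t ^ ∑ i, |α i| := by
  rw [Finset.sum_mul]
  refine Finset.sum_le_sum fun i _ => ?_
  calc c i * t ^ α i ≤ |c i| * t ^ α i := by gcongr; exact le_abs_self _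
    _ ≤ |c i| * t ^ ∑ i, |α i| := by
      gcongr
      exact (le_abs_self _).trans
          (Finset.single_le_sum (fun i _ => abs_nonneg (α i)) (Finset.mem_univ i))

theorem not_forall_exp_eq_sum_mul_rpow {ι : Type*} [Fintype ι] (c α : ι → ℝ) :
    ¬ ∀ t > 0, Real.exp t = ∑ i, c i * t ^ α i := by
  intro h
  set C := ∑ i, |c i|
  set A := ∑ i, |α i|
  obtain ⟨t, ht, hgrowth⟩ := ((eventually_ge_atTop (1 : ℝ)).and
    ((tendsto_exp_div_rpow_atTop A).eventually (eventually_gt_atTop C))).exists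
  have hbound := sum_mul_rpow_le c α ht
  rw [← h t (by linarith), ← div_le_iff₀ (Real.rpow_pos_of_pos (by linarith) _)] at hbound
  exact hgrowth.not_ge hbound

/-- **No homogeneous decomposition without vertical translation invariance**
(Theorem 8.1): there exists a continuous, dually translation invariant
valuation on `Conv(ℝⁿ;ℝ)` that is not a finite sum of homogeneous
valuations. -/
theorem no_homogeneous_decomposition_finite (n : ℕ) :
    ∃ Z : (Vn n → ℝ) → ℝ,
      ContinuousValR (ConvFin n) Z ∧ IsValuationR (ConvFin n) Z ∧
      DuallyTranslationInvariant (ConvFin n) Z ∧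
      ¬ ∃ (m : ℕ) (Zs : Fin m → (Vn n → ℝ) → ℝ) (α : Fin m → ℝ),
          (∀ i, IsValuationR (ConvFin n) (Zs i) ∧
            HomogeneousR (ConvFin n) (Zs i) (α i)) ∧
          ∀ v ∈ ConvFin n, Z v = ∑ i, Zs i v := by
  refine ⟨fun v => Real.exp (v 0), fun vk v hk hv he => ?_, isValuationR_comp_eval _ _ 0,
    fun v _ ℓ => by simp only [map_zero, add_zero], ?_⟩
  · exact (Real.continuous_exp.tendsto _).comp (he.tendsto_apply hk hv 0)
  rintro ⟨m, Zs, α, hZs, hsum⟩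
  refine not_forall_exp_eq_sum_mul_rpow (fun i => Zs i fun _ => 1) α fun t ht => ?_
  calc Real.exp t = ∑ i, Zs i (fun _ => t) := hsum (fun _ => t) (convexOn_const t convex_univ)
    _ = ∑ i, Zs i (fun _ => 1) * t ^ α i := by
      simp only [(hZs _).2.apply_const ht, mul_comm]
end
end

section
/- There exists a continuous and translation invariant valuation Z : Conv_sc(ℝⁿ) → ℝ that cannot be written as a finite sum of epi-homogeneous valuations; that is, there is no m ∈ ℕ and no valuations Z₁,…,Z_m : Conv_sc(ℝⁿ) → ℝ, each epi-homogeneous of some degree α_i ∈ ℝ, with Z = Z₁ + ⋯ + Z_m. -/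
open Filter Topology MeasureTheory

noncomputable section

/-- Translation invariance (without vertical translations):
invariance under `u ↦ u(· - x₀)`. -/
def TranslationInvariant {n : ℕ} (X : Set (Vn n → EReal)) (Z : (Vn n → EReal) → ℝ) : Prop :=
  ∀ u ∈ X, ∀ x₀ : Vn n, Z (fun x => u (x - x₀)) = Z u

/-!
The valuation is `u ↦ ζ (min u)` with `ζ t = max 0 (2 - t)`. The minimum of a super-coercive
function in `Conv(ℝⁿ)` is attained, depends continuously on `u` under epi-convergence, and sends
`u ∧ v` and `u ∨ v` to the minimum and the maximum of `min u` and `min v`. For `u ∨ v`, with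
`b = max (min u) (min v)`, the segment between minimizers of `u` and `v` lies in the sublevel set
`{u ∧ v ≤ b} = {u ≤ b} ∪ {v ≤ b}` of the convex function `u ∧ v`; being connected, it meets
`{u ≤ b} ∩ {v ≤ b}`.
The paraboloid `l ⊡ (‖x‖² + 1) = ‖x‖² / l + l` has minimum `l`, so a decomposition into
epi-homogeneous valuations would give `ζ l = ∑ cᵢ l ^ αᵢ` for all `l > 0`. The right-hand side is
real analytic on `(0, ∞)` and vanishes for `l ≥ 2`, hence vanishes at `l = 1`, where `ζ 1 = 1`.
-/

open Set Metric

def minValue {n : ℕ} (u : Vn n → EReal) : EReal := ⨅ x, u x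

theorem analyticOnNhd_rpow_const (a : ℝ) : AnalyticOnNhd ℝ (fun l : ℝ => l ^ a) (Ioi 0) :=
  fun _ hx => ((analyticAt_log hx).mul analyticAt_const).rexp'.congr <| by
    filter_upwards [Ioi_mem_nhds hx] with l hl using (Real.rpow_def_of_pos hl a).symm

theorem sum_mul_rpow_eq_zero_of_forall_ge {ι : Type*} [Fintype ι] (c α : ι → ℝ) {a : ℝ}
    (h : ∀ l, a ≤ l → ∑ i, c i * l ^ α i = 0) {l : ℝ} (hl : 0 < l) :
    ∑ i, c i * l ^ α i = 0 := by
  have hf : AnalyticOnNhd ℝ (fun l : ℝ => ∑ i, c i * l ^ α i) (Ioi 0) :=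
    Finset.analyticOnNhd_fun_sum _ fun i _ =>
      analyticOnNhd_const.mul (analyticOnNhd_rpow_const (α i))
  have hz : (max a 0 + 1 : ℝ) ∈ Ioi 0 := by simp only [mem_Ioi]; positivity
  refine hf.eqOn_zero_of_preconnected_of_eventuallyEq_zero isPreconnected_Ioi hz ?_ hl
  filter_upwards [Ioi_mem_nhds (lt_add_one (max a 0))] with l hl'
  exact h l ((le_max_left a 0).trans hl'.le)

theorem exists_mem_segment_norm_eq {E : Type*} [SeminormedAddCommGroup E] [NormedSpace ℝ E]
    {a b : E} {r : ℝ} (ha : ‖a‖ ≤ r) (hb : r ≤ ‖b‖) : ∃ p ∈ segment ℝ a b, ‖p‖ = r :=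
  (convex_segment a b).isPreconnected.intermediate_value (left_mem_segment ℝ a b)
    (right_mem_segment ℝ a b) continuous_norm.continuousOn ⟨ha, hb⟩

theorem tendsto_extend_of_strictMono {X : Type*} [TopologicalSpace X] {φ : ℕ → ℕ}
    (hφ : StrictMono φ) {y : ℕ → X} {z : X} (hy : Tendsto y atTop (𝓝 z)) :
    Tendsto (Function.extend φ y fun _ => z) atTop (𝓝 z) := by
  intro s hs
  obtain ⟨N, hN⟩ := mem_atTop_sets.1 (hy hs)
  refine mem_atTop_sets.2 ⟨φ N, fun k hk => ?_⟩
  by_cases hk' : ∃ j, φ j = k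
  · obtain ⟨j, rfl⟩ := hk'
    simpa only [mem_preimage, hφ.injective.extend_apply] using hN j (hφ.le_iff_le.1 hk)
  · simpa only [mem_preimage, Function.extend_apply' _ _ _ hk'] using mem_of_mem_nhds hs

variable {n : ℕ} {u v : Vn n → EReal}

theorem IsConvexFn.convex_le (hu : IsConvexFn u) (c : ℝ) : Convex ℝ {x | u x ≤ c} := by
  intro x hx y hy a b ha hb hab
  rcases ha.eq_or_lt with rfl | ha
  · simpa [show b = 1 by linarith] using hy
  rcases hb.eq_or_lt with rfl | hb
  · simpa [show a = 1 by linarith] using hx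
  obtain rfl : b = 1 - a := by linarith
  calc u (a • x + (1 - a) • y) ≤ (a : EReal) * u x + ((1 - a : ℝ) : EReal) * u y :=
        hu x y a ha (by linarith)
    _ ≤ (a : EReal) * c + ((1 - a : ℝ) : EReal) * c :=
        add_le_add (mul_le_mul_of_nonneg_left hx (by exact_mod_cast ha.le))
          (mul_le_mul_of_nonneg_left hy (by exact_mod_cast hb.le))
    _ = c := by rw [← EReal.coe_mul, ← EReal.coe_mul, ← EReal.coe_add]; ring_nf

theorem ConvexOn.isConvexFn {f : Vn n → ℝ} (hf : ConvexOn ℝ univ f) :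
    IsConvexFn fun x => (f x : EReal) := fun x y t ht ht1 => by
  rw [← EReal.coe_mul, ← EReal.coe_mul, ← EReal.coe_add, EReal.coe_le_coe_iff]
  exact hf.2 (mem_univ x) (mem_univ y) ht.le (sub_nonneg.2 ht1.le) (add_sub_cancel t 1)

theorem exists_forall_norm_ge_lt (hu : u ∈ ConvSc n) (C : ℝ) :
    ∃ R, ∀ x : Vn n, R ≤ ‖x‖ → (C : EReal) < u x := by
  obtain ⟨R, hR⟩ := hu.2 (|C| + 1)
  refine ⟨max R 1, fun x hx => lt_of_lt_of_le ?_ (hR x (le_of_max_le_left hx))⟩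
  have h1 : 1 ≤ ‖x‖ := le_of_max_le_right hx
  exact_mod_cast (show C < (|C| + 1) * ‖x‖ by nlinarith [le_abs_self C, abs_nonneg C])

theorem exists_apply_eq_minValue (hu : u ∈ ConvSc n) :
    ∃ x, ∃ m : ℝ, u x = m ∧ minValue u = m := by
  obtain ⟨-, hlsc, hbot, x₀, hx₀⟩ := hu.1
  have hx₀r : u x₀ = ((u x₀).toReal : EReal) := (EReal.coe_toReal hx₀ (hbot x₀)).symm
  obtain ⟨R, hR⟩ := exists_forall_norm_ge_lt hu (u x₀).toReal
  have hx₀R : x₀ ∈ closedBall (0 : Vn n) R := by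
    by_contra hx
    rw [mem_closedBall_zero_iff, not_le] at hx
    exact (hR x₀ hx.le).ne hx₀r.symm
  obtain ⟨x, -, hxmin⟩ :=
    (hlsc.lowerSemicontinuousOn _).exists_isMinOn ⟨x₀, hx₀R⟩ (isCompact_closedBall _ _)
  have hmin : ∀ y, u x ≤ u y := fun y => by
    by_cases hy : y ∈ closedBall (0 : Vn n) R
    · exact isMinOn_iff.1 hxmin y hy
    · rw [mem_closedBall_zero_iff, not_le] at hy
      exact (isMinOn_iff.1 hxmin x₀ hx₀R).trans (hx₀r.trans_lt (hR y hy.le)).le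
  have hxtop : u x ≠ ⊤ := ne_top_of_le_ne_top hx₀ (hmin x₀)
  refine ⟨x, (u x).toReal, (EReal.coe_toReal hxtop (hbot x)).symm, ?_⟩
  rw [EReal.coe_toReal hxtop (hbot x)]
  exact le_antisymm (iInf_le _ x) (le_iInf hmin)

theorem minValue_inf (u v : Vn n → EReal) : minValue (u ⊓ v) = minValue u ⊓ minValue v :=
  iInf_inf_eq

theorem minValue_sup_le_of_le (hu : u ∈ ConvSc n) (hv : v ∈ ConvSc n) (hw : IsConvexFn (u ⊓ v))
    (huv : minValue u ≤ minValue v) : minValue (u ⊔ v) ≤ minValue v := by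
  obtain ⟨xu, a, hxu, ha⟩ := exists_apply_eq_minValue hu
  obtain ⟨xv, b, hxv, hb⟩ := exists_apply_eq_minValue hv
  have hxu' : u xu ≤ b := hxu ▸ ha ▸ hb ▸ huv
  have hcover : segment ℝ xu xv ⊆ u ⁻¹' Iic b ∪ v ⁻¹' Iic b := fun p hp => by
    have hp' : u p ⊓ v p ≤ b := (hw.convex_le b).segment_subset (inf_le_left.trans hxu')
      (inf_le_right.trans hxv.le) hp
    exact inf_le_iff.1 hp'
  obtain ⟨p, -, hpu, hpv⟩ := isPreconnected_closed_iff.1 (convex_segment xu xv).isPreconnected _ _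
    (hu.1.2.1.isClosed_preimage b) (hv.1.2.1.isClosed_preimage b) hcover
    ⟨xu, left_mem_segment ℝ xu xv, hxu'⟩ ⟨xv, right_mem_segment ℝ xu xv, hxv.le⟩
  rw [hb]
  exact (iInf_le _ p).trans (sup_le hpu hpv)

theorem minValue_sup (hu : u ∈ ConvSc n) (hv : v ∈ ConvSc n) (hw : IsConvexFn (u ⊓ v)) :
    minValue (u ⊔ v) = minValue u ⊔ minValue v := by
  refine le_antisymm ?_ (sup_le (iInf_mono fun _ => le_sup_left) (iInf_mono fun _ => le_sup_right))
  rcases le_total (minValue u) (minValue v) with h | h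
  · exact (minValue_sup_le_of_le hu hv hw h).trans le_sup_right
  · rw [sup_comm u, sup_comm (minValue u)]
    exact (minValue_sup_le_of_le hv hu (inf_comm u v ▸ hw) h).trans le_sup_right

theorem minValue_comp_sub (u : Vn n → EReal) (x₀ : Vn n) :
    minValue (fun x => u (x - x₀)) = minValue u :=
  (Equiv.subRight x₀).iInf_comp (g := u)

section EpiConvergence

variable {uk : ℕ → Vn n → EReal}

theorem EpiConverges.eventually_forall_lt_of_isCompact (h : EpiConverges uk u)
    {K : Set (Vn n)} (hK : IsCompact K) {c : EReal} (hc : ∀ z ∈ K, c < u z) :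
    ∀ᶠ k in atTop, ∀ y ∈ K, c < uk k y := by
  by_contra hfreq
  simp only [not_eventually, not_forall, not_lt, exists_prop] at hfreq
  obtain ⟨φ, hφ, hφK⟩ := extraction_of_frequently_atTop hfreq
  choose p hpK hpc using hφK
  obtain ⟨z, hzK, ψ, hψ, hpz⟩ := hK.tendsto_subseq hpK
  have hσ : StrictMono (φ ∘ ψ) := hφ.comp hψ
  set x := Function.extend (φ ∘ ψ) (p ∘ ψ) fun _ => z
  have hx : ∀ j, x (φ (ψ j)) = p (ψ j) := hσ.injective.extend_apply (p ∘ ψ) _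
  have hlow : ∃ᶠ k in atTop, uk k (x k) ≤ c := hσ.tendsto_atTop.frequently <|
    Frequently.of_forall fun j => by simpa only [Function.comp_apply, hx] using hpc (ψ j)
  exact (hc z hzK).not_ge <| ((h z).1 x (tendsto_extend_of_strictMono hσ hpz)).trans
    (liminf_le_of_frequently_le' hlow)

theorem EpiConverges.eventually_forall_lt_of_lt_minValue (h : EpiConverges uk u)
    (huk : ∀ k, IsConvexFn (uk k)) (hu : u ∈ ConvSc n) {c : EReal} (hc : c < minValue u) :
    ∀ᶠ k in atTop, ∀ y, c < uk k y := by
  obtain ⟨xs, μ, hxs, hμ⟩ := exists_apply_eq_minValue hu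
  obtain ⟨x, hx, hux⟩ := (h xs).2
  obtain ⟨R, hR⟩ := exists_forall_norm_ge_lt hu (μ + 1)
  set r := max R (‖xs‖ + 1)
  have hμ1 : ((μ : ℝ) : EReal) < ((μ + 1 : ℝ) : EReal) := by exact_mod_cast lt_add_one μ
  have hball : ∀ᶠ k in atTop, ∀ y ∈ closedBall (0 : Vn n) r, c < uk k y :=
    h.eventually_forall_lt_of_isCompact (isCompact_closedBall _ _)
      fun z _ => hc.trans_le (iInf_le _ z)
  have hsphere : ∀ᶠ k in atTop, ∀ y ∈ sphere (0 : Vn n) r, ((μ + 1 : ℝ) : EReal) < uk k y :=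
    h.eventually_forall_lt_of_isCompact (isCompact_sphere _ _)
      fun z hz => hR z ((le_max_left _ _).trans (mem_sphere_zero_iff_norm.1 hz).ge)
  have hnear : ∀ᶠ k in atTop, ‖x k‖ ≤ r :=
    hx.norm.eventually_le_const ((lt_add_one _).trans_le (le_max_right _ _))
  have hlow : ∀ᶠ k in atTop, uk k (x k) < ((μ + 1 : ℝ) : EReal) :=
    hux.eventually_lt_const (hxs ▸ hμ1)
  filter_upwards [hball, hsphere, hnear, hlow] with k hkball hksphere hknear hklow y
  by_cases hy : ‖y‖ ≤ r
  · exact hkball y (mem_closedBall_zero_iff.2 hy)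
  -- Far out, `uk k y ≤ c` would give `uk k ≤ μ + 1` on the segment from `x k` to `y`, which
  -- crosses the sphere where `uk k > μ + 1`.
  by_contra! hyc
  obtain ⟨p, hp, hpr⟩ := exists_mem_segment_norm_eq hknear (not_le.1 hy).le
  have hp1 : uk k p ≤ ((μ + 1 : ℝ) : EReal) := (huk k).convex_le (μ + 1) |>.segment_subset
    hklow.le (hyc.trans (hc.trans (hμ ▸ hμ1)).le) hp
  exact (hksphere p (mem_sphere_zero_iff_norm.2 hpr)).not_ge hp1

theorem EpiConverges.tendsto_minValue (h : EpiConverges uk u) (huk : ∀ k, IsConvexFn (uk k))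
    (hu : u ∈ ConvSc n) : Tendsto (fun k => minValue (uk k)) atTop (𝓝 (minValue u)) := by
  refine tendsto_order.2 ⟨fun a ha => ?_, fun a ha => ?_⟩
  · obtain ⟨c, hac, hc⟩ := exists_between ha
    filter_upwards [h.eventually_forall_lt_of_lt_minValue huk hu hc] with k hk
    exact hac.trans_le (le_iInf fun y => (hk y).le)
  · obtain ⟨xs, μ, hxs, hμ⟩ := exists_apply_eq_minValue hu
    obtain ⟨x, -, hux⟩ := (h xs).2
    filter_upwards [hux.eventually_lt_const (hxs.trans hμ.symm ▸ ha)] with k hk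
    exact (iInf_le _ _).trans_lt hk

end EpiConvergence

theorem continuousVal_comp_minValue {f : ℝ → ℝ} (hf : Continuous f) :
    ContinuousVal (ConvSc n) fun u => f (minValue u).toReal := by
  intro uk u huk hu h
  obtain ⟨-, m, -, hm⟩ := exists_apply_eq_minValue hu
  have hlim := h.tendsto_minValue (fun k => (huk k).1.1) hu
  show Tendsto (fun k => f (minValue (uk k)).toReal) atTop (𝓝 (f (minValue u).toReal))
  rw [hm] at hlim ⊢
  exact (hf.tendsto _).comp
    ((EReal.tendsto_toReal (EReal.coe_ne_top m) (EReal.coe_ne_bot m)).comp hlim)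

theorem isValuation_comp_minValue (f : EReal → ℝ) :
    IsValuation (ConvSc n) fun u => f (minValue u) := by
  intro u v hu hv _ hinf
  simp only [minValue_sup hu hv hinf.1.1, minValue_inf]
  rcases le_total (minValue u) (minValue v) with h | h
  · rw [sup_eq_right.2 h, inf_eq_left.2 h, add_comm]
  · rw [sup_eq_left.2 h, inf_eq_right.2 h]

theorem translationInvariant_comp_minValue (f : EReal → ℝ) :
    TranslationInvariant (ConvSc n) fun u => f (minValue u) := fun u _ x₀ => by
  simp only [minValue_comp_sub]

def paraboloid (a b : ℝ) : Vn n → EReal := fun x => ((a * ‖x‖ ^ 2 + b : ℝ) : EReal)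

theorem paraboloid_mem_convSc {a : ℝ} (ha : 0 < a) (b : ℝ) : paraboloid a b ∈ ConvSc n := by
  refine ⟨⟨ConvexOn.isConvexFn ?_, ?_, fun _ => EReal.coe_ne_bot _, 0, EReal.coe_ne_top _⟩,
    fun M => ⟨max 1 ((|M| + |b|) / a), fun x hx => ?_⟩⟩
  · exact (((convexOn_univ_norm.pow fun x _ => norm_nonneg x) 2).smul ha.le).add_const b
  · exact (continuous_coe_real_ereal.comp (by fun_prop)).lowerSemicontinuous
  · have h1 : 1 ≤ ‖x‖ := le_of_max_le_left hx
    have h2 : |M| + |b| ≤ a * ‖x‖ := (div_le_iff₀' ha).1 (le_of_max_le_right hx)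
    have h3 := mul_le_mul_of_nonneg_right h2 (norm_nonneg x)
    show ((M * ‖x‖ : ℝ) : EReal) ≤ ((a * ‖x‖ ^ 2 + b : ℝ) : EReal)
    exact_mod_cast (by nlinarith [le_abs_self M, neg_abs_le b, abs_nonneg b] :
      M * ‖x‖ ≤ a * ‖x‖ ^ 2 + b)

theorem epiMul_paraboloid {l : ℝ} (hl : 0 < l) (a b : ℝ) :
    epiMul l (paraboloid a b : Vn n → EReal) = paraboloid (a / l) (l * b) := by
  funext x
  simp only [epiMul, hl.ne', if_false, paraboloid, ← EReal.coe_mul, norm_smul, norm_inv,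
    Real.norm_eq_abs, abs_of_pos hl, EReal.coe_eq_coe_iff]
  field_simp

theorem minValue_paraboloid {a : ℝ} (ha : 0 ≤ a) (b : ℝ) :
    minValue (paraboloid a b : Vn n → EReal) = b :=
  le_antisymm ((iInf_le (paraboloid a b) 0).trans (by simp [paraboloid]))
    (le_iInf fun x => EReal.coe_le_coe_iff.2 (le_add_of_nonneg_left (by positivity)))

/-- **No epi-homogeneous decomposition without vertical translation
invariance** (Theorem 8.2): there exists a continuous, translation invariant
valuation on `Conv_sc(ℝⁿ)` that is not a finite sum of epi-homogeneous
valuations. -/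
theorem no_epihomogeneous_decomposition_sc (n : ℕ) :
    ∃ Z : (Vn n → EReal) → ℝ,
      ContinuousVal (ConvSc n) Z ∧ IsValuation (ConvSc n) Z ∧
      TranslationInvariant (ConvSc n) Z ∧
      ¬ ∃ (m : ℕ) (Zs : Fin m → (Vn n → EReal) → ℝ) (α : Fin m → ℝ),
          (∀ i, IsValuation (ConvSc n) (Zs i) ∧
            EpiHomogeneous (ConvSc n) (Zs i) (α i)) ∧
          ∀ u ∈ ConvSc n, Z u = ∑ i, Zs i u := by
  refine ⟨fun u => max 0 (2 - (minValue u).toReal),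
    continuousVal_comp_minValue (f := fun t => max 0 (2 - t)) (by fun_prop),
    isValuation_comp_minValue fun a => max 0 (2 - a.toReal),
    translationInvariant_comp_minValue fun a => max 0 (2 - a.toReal), ?_⟩
  rintro ⟨m, Zs, α, hZs, hdec⟩
  have hsum : ∀ l : ℝ, 0 < l → max 0 (2 - l) = ∑ i, Zs i (paraboloid 1 1) * l ^ α i := by
    intro l hl
    have h := hdec _ (epiMul_paraboloid hl 1 1 ▸ paraboloid_mem_convSc (by positivity) _)
    dsimp only at h
    rw [Finset.sum_congr rfl fun i _ => (hZs i).2 _ (paraboloid_mem_convSc one_pos 1) l hl,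
      epiMul_paraboloid hl, minValue_paraboloid (by positivity), EReal.toReal_coe, mul_one] at h
    simpa only [mul_comm] using h
  have h1 := sum_mul_rpow_eq_zero_of_forall_ge (fun i => Zs i (paraboloid 1 1)) α (a := 2)
    (fun l hl => by rw [← hsum l (by linarith), max_eq_left (by linarith)]) one_pos
  rw [← hsum 1 one_pos] at h1
  norm_num at h1
end
end
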